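/- arXiv:1902.02526 — 7 statements merged into one kernel-verified Lean document; each statement's English description precedes it below -/
import Mathlib

section
/- (Erdős–Gallai) Every connected graph G on n vertices contains a (simple) path with at least min{2·δ(G)+1, n} vertices. -/
/-!
Take a longest path `P` from `u` to `v`. By maximality every neighbour of `u` and of `v` lies
on `P`, so if `P` has at most `2δ` vertices, counting the edges of `P` gives an edge `yz` of `P`
with `u ~ z` and `v ~ y`. Then `u ⇝ y ~ v ⇝ z ~ u` is a closed walk visiting exactly the vertices
of `P`, each once. If `P` missed a vertex, connectivity would give an edge leaving this closed
walk, and opening the walk at that edge would yield a path longer than `P`.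
-/

namespace List

theorem countP_add_countP_le_length {α : Type*} {l : List α} {p q : α → Bool}
    (h : ∀ a ∈ l, ¬(p a ∧ q a)) : l.countP p + l.countP q ≤ l.length := by
  rw [length_eq_countP_add_countP p]
  gcongr l.countP p + ?_
  exact countP_mono_left fun a ha hq => by simpa using fun hp => h a ha ⟨hp, hq⟩

end List

namespace SimpleGraph

variable {V : Type*} {G : SimpleGraph V}

namespace Walk

def IsLongestPath {u v : V} (p : G.Walk u v) : Prop :=
  p.IsPath ∧ ∀ (a b : V) (q : G.Walk a b), q.IsPath → q.length ≤ p.length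

end Walk

variable (G) in
theorem exists_isLongestPath [Fintype V] [Nonempty V] :
    ∃ (u v : V) (p : G.Walk u v), p.IsLongestPath := by
  let lengths : Set ℕ := {n | ∃ (u v : V) (p : G.Walk u v), p.IsPath ∧ p.length = n}
  have hne : lengths.Nonempty := ⟨0, Classical.arbitrary V, _, .nil, .nil, rfl⟩
  have hbdd : BddAbove lengths := ⟨Fintype.card V, by
    rintro _ ⟨u, v, p, hp, rfl⟩
    exact hp.length_lt.le⟩
  obtain ⟨u, v, p, hp, hlen⟩ := Nat.sSup_mem hne hbdd
  exact ⟨u, v, p, hp, fun a b q hq => hlen ▸ le_csSup hbdd ⟨a, b, q, hq, rfl⟩⟩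

namespace Walk

theorem IsLongestPath.reverse {u v : V} {p : G.Walk u v} (hp : p.IsLongestPath) :
    p.reverse.IsLongestPath :=
  ⟨hp.1.reverse, by simpa using hp.2⟩

theorem IsLongestPath.mem_support_of_adj_start {u v w : V} {p : G.Walk u v}
    (hp : p.IsLongestPath) (huw : G.Adj u w) : w ∈ p.support := by
  by_contra hw
  simpa using hp.2 _ _ _ (hp.1.cons (h := huw.symm) hw)

theorem IsLongestPath.mem_support_of_adj_end {u v w : V} {p : G.Walk u v}
    (hp : p.IsLongestPath) (hvw : G.Adj v w) : w ∈ p.support := by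
  simpa using hp.reverse.mem_support_of_adj_start hvw

theorem exists_eq_append_cons_of_mem_darts {u v : V} {p : G.Walk u v} {d : G.Dart}
    (hd : d ∈ p.darts) :
    ∃ (p₁ : G.Walk u d.fst) (p₂ : G.Walk d.snd v), p = p₁.append (cons d.adj p₂) := by
  obtain ⟨p₁, p₂, rfl⟩ := (isSubwalk_toWalk_adj_iff_mem_darts p).mpr hd
  exact ⟨p₁, p₂, by rw [← append_assoc]; rfl⟩

/-- The closed walk `u ~ d.snd ⇝ v ~ d.fst ⇝ u` (Pósa's rotation). -/
theorem exists_support_tail_perm_of_mem_darts {u v : V} {p : G.Walk u v} {d : G.Dart}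
    (hd : d ∈ p.darts) (hu : G.Adj u d.snd) (hv : G.Adj v d.fst) :
    ∃ c : G.Walk u u, c.support.tail.Perm p.support := by
  obtain ⟨p₁, p₂, rfl⟩ := exists_eq_append_cons_of_mem_darts hd
  refine ⟨cons hu (p₂.append (cons hv p₁.reverse)), ?_⟩
  simpa [support_append] using
    ((List.reverse_perm _).append_left p₂.support).trans List.perm_append_comm

theorem exists_isPath_length_eq_of_adj [DecidableEq V] {a w x : V} (c : G.Walk a a)
    (hc : c.support.tail.Nodup) (hw : w ∈ c.support.tail) (hx : x ∉ c.support.tail)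
    (hwx : G.Adj w x) : ∃ (b : V) (q : G.Walk x b), q.IsPath ∧ q.length = c.length := by
  have hrot := support_rotate c w (List.mem_of_mem_tail hw)
  have hlen := length_rotate c w (List.mem_of_mem_tail hw)
  generalize c.rotate w (List.mem_of_mem_tail hw) = c' at hrot hlen
  cases c' with
  | nil => simp_all
  | cons h r =>
    rw [support_cons, List.tail_cons] at hrot
    have hr : r.IsPath := IsPath.mk' (hrot.perm.nodup_iff.mpr hc)
    refine ⟨_, cons hwx.symm r.reverse, hr.reverse.cons ?_, ?_⟩
    · simpa [hrot.perm.mem_iff] using hx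
    · simpa using hlen

variable [DecidableRel G.Adj]

theorem degree_le_countP_darts {u v : V} [Fintype (G.neighborSet u)] (p : G.Walk u v)
    (hu : ∀ w, G.Adj u w → w ∈ p.support) :
    G.degree u ≤ p.darts.countP (fun d => G.Adj u d.snd) := by
  classical
  rw [← card_neighborFinset_eq_degree, List.countP_eq_length_filter,
    ← List.length_map (f := fun d : G.Dart => d.snd)]
  refine (Finset.card_le_card fun w hw => ?_).trans (List.toFinset_card_le _)
  rw [mem_neighborFinset] at hw
  have hw' : w ∈ p.support.tail := by
    have := hu w hw
    rw [← cons_tail_support, List.mem_cons] at this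
    exact this.resolve_left hw.ne'
  rw [← map_snd_darts, List.mem_map] at hw'
  obtain ⟨d, hd, rfl⟩ := hw'
  simpa using ⟨d, ⟨hd, hw⟩, rfl⟩

theorem exists_mem_darts_adj_adj {u v : V} [Fintype (G.neighborSet u)]
    [Fintype (G.neighborSet v)] (p : G.Walk u v) (hu : ∀ w, G.Adj u w → w ∈ p.support)
    (hv : ∀ w, G.Adj v w → w ∈ p.support) (hlt : p.length < G.degree u + G.degree v) :
    ∃ d ∈ p.darts, G.Adj u d.snd ∧ G.Adj v d.fst := by
  by_contra! h
  have hv' : G.degree v ≤ p.darts.countP (fun d => G.Adj v d.fst) := by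
    simpa [darts_reverse, List.countP_map, Function.comp_def] using
      p.reverse.degree_le_countP_darts (by simpa using hv)
  have := List.countP_add_countP_le_length (l := p.darts) (p := fun d => G.Adj u d.snd)
    (q := fun d => G.Adj v d.fst) (by simpa using h)
  have := p.degree_le_countP_darts hu
  rw [length_darts] at *
  omega

end Walk

end SimpleGraph

open SimpleGraph Walk

/-- **Erdős–Gallai.** Every connected graph `G` on `n` vertices contains a
(simple) path with at least `min {2·δ(G) + 1, n}` vertices. -/
theorem erdos_gallai_path {V : Type*} [Fintype V] (G : SimpleGraph V) [DecidableRel G.Adj]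
    (hconn : G.Connected) :
    ∃ (u v : V) (p : G.Walk u v), p.IsPath ∧
      min (2 * G.minDegree + 1) (Fintype.card V) ≤ p.support.length := by
  classical
  have : Nonempty V := hconn.nonempty
  obtain ⟨u, v, p, hp⟩ := exists_isLongestPath G
  refine ⟨u, v, p, hp.1, ?_⟩
  by_contra! hshort
  rw [lt_min_iff, length_support] at hshort
  obtain ⟨d, hd, hud, hvd⟩ := p.exists_mem_darts_adj_adj (fun _ => hp.mem_support_of_adj_start)
    (fun _ => hp.mem_support_of_adj_end)
    (by linarith [G.minDegree_le_degree u, G.minDegree_le_degree v])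
  obtain ⟨c, hc⟩ := exists_support_tail_perm_of_mem_darts hd hud hvd
  obtain ⟨x, -, hx⟩ := Finset.exists_mem_notMem_of_card_lt_card (s := p.support.toFinset)
    (t := Finset.univ) ((List.toFinset_card_le _).trans_lt (by simpa using hshort.2))
  obtain ⟨e, -, he₁, he₂⟩ :=
    (hconn.preconnected u x).some.exists_boundary_dart {w | w ∈ p.support} p.start_mem_support
      (by simpa using hx)
  obtain ⟨_, q, hq, hqlen⟩ :=
    c.exists_isPath_length_eq_of_adj (hc.nodup_iff.mpr hp.1.support_nodup) (hc.mem_iff.mpr he₁)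
      (by rwa [hc.mem_iff]) e.adj
  have hclen : c.length = p.length + 1 := by simpa using hc.length_eq
  have hlongest := hp.2 _ _ q hq
  omega
end

section
/- Let G be an n-vertex graph and k a positive integer such that δ(G) ≥ max{5k−3, n−k}. Let {s_1,t_1},…,{s_r,t_r} with r ≤ k be pairs of vertices of G such that distinct pairs are disjoint (i.e., for i ≠ j, {s_i,t_i} ∩ {s_j,t_j} = ∅; within a pair, s_i = t_i is allowed), and such that s_i ≠ t_i for at least one index i. Then there exists a family of pairwise vertex-disjoint paths P_1,…,P_r in G such that each P_i is an (s_i,t_i)-path and the paths together cover all vertices of G, i.e., V(P_1) ∪ … ∪ V(P_r) = V(G). -/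
open Finset

namespace RC

variable {V : Type*}

section ConfDef
variable (G : SimpleGraph V) [DecidableRel G.Adj]

/-- penalty of a consecutive pair -/
def J (x y : V) : ℕ := if G.Adj x y then 0 else 1

/-- number of conflicts (consecutive non-adjacent pairs) in a list -/
def conf : List V → ℕ
  | a :: b :: rest => J G a b + conf (b :: rest)
  | _ => 0

@[simp] lemma conf_nil : conf G ([] : List V) = 0 := rfl
@[simp] lemma conf_single (a : V) : conf G [a] = 0 := rfl
lemma conf_cons_cons (a b : V) (l : List V) :
    conf G (a :: b :: l) = J G a b + conf G (b :: l) := rfl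

lemma J_symm (x y : V) : J G x y = J G y x := by
  unfold J
  by_cases h : G.Adj x y
  · simp [h, h.symm]
  · rw [if_neg h, if_neg (fun h' => h h'.symm)]

lemma J_eq_zero {x y : V} (h : G.Adj x y) : J G x y = 0 := by simp [J, h]
lemma J_eq_one {x y : V} (h : ¬ G.Adj x y) : J G x y = 1 := by simp [J, h]

lemma conf_cons (a : V) (l : List V) (h : l ≠ []) :
    conf G (a :: l) = J G a (l.head h) + conf G l := by
  cases l with
  | nil => simp at h
  | cons b l' => rfl

lemma conf_append (X Y : List V) (hX : X ≠ []) (hY : Y ≠ []) :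
    conf G (X ++ Y) = conf G X + J G (X.getLast hX) (Y.head hY) + conf G Y := by
  induction X with
  | nil => simp at hX
  | cons a X ih =>
    cases X with
    | nil =>
      rw [List.singleton_append, conf_cons G a Y hY]
      simp
    | cons a' X' =>
      have h1 : (a' :: X') ++ Y ≠ [] := by simp
      rw [List.cons_append, conf_cons G a _ h1, ih (by simp),
        conf_cons G a (a' :: X') (by simp)]
      have hh : ((a' :: X') ++ Y).head h1 = a' := rfl
      have hl : (a :: a' :: X').getLast hX = (a' :: X').getLast (by simp) := by
        simp [List.getLast_cons]
      rw [hh, hl]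
      have hh2 : (a' :: X').head (by simp) = a' := rfl
      rw [hh2]
      ring

lemma conf_reverse (l : List V) : conf G l.reverse = conf G l := by
  induction l with
  | nil => rfl
  | cons a l ih =>
    cases l with
    | nil => rfl
    | cons b l' =>
      have h1 : (b :: l').reverse ≠ [] := by simp
      have e : (a :: b :: l').reverse = (b :: l').reverse ++ [a] := by simp
      rw [e, conf_append G _ _ h1 (by simp), ih, conf_cons_cons]
      have hlast : ((b :: l').reverse).getLast h1 = b := by
        rw [List.getLast_reverse]; rfl
      rw [hlast]
      simp [J_symm G b a]
      ring

lemma conf_triple (A S D : List V) (hA : A ≠ []) (hS : S ≠ []) (hD : D ≠ []) :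
    conf G (A ++ S ++ D) = conf G A + J G (A.getLast hA) (S.head hS) + conf G S
      + J G (S.getLast hS) (D.head hD) + conf G D := by
  have hSD : S ++ D ≠ [] := by simp [hS]
  rw [List.append_assoc, conf_append G A (S ++ D) hA hSD,
    conf_append G S D hS hD]
  have hh : (S ++ D).head hSD = S.head hS := List.head_append_of_ne_nil hS
  rw [hh]
  ring

lemma conf_rev_triple (A S D : List V) (hA : A ≠ []) (hS : S ≠ []) (hD : D ≠ []) :
    conf G (A ++ S.reverse ++ D) = conf G A + J G (A.getLast hA) (S.getLast hS) + conf G S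
      + J G (S.head hS) (D.head hD) + conf G D := by
  have hSr : S.reverse ≠ [] := by simp [hS]
  rw [conf_triple G A S.reverse D hA hSr hD, conf_reverse]
  have h1 : (S.reverse).head hSr = S.getLast hS := by
    rw [List.head_reverse]
  have h2 : (S.reverse).getLast hSr = S.head hS := by
    rw [List.getLast_reverse]
  rw [h1, h2]

/-- The key swap: if the boundary pair (lastA, headS) is a conflict but
(lastA, lastS) and (headS, headD) are edges, reversing S strictly reduces conflicts. -/
lemma conf_swap₁ (A S D : List V) (hA : A ≠ []) (hS : S ≠ []) (hD : D ≠ [])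
    (h1 : G.Adj (A.getLast hA) (S.getLast hS)) (h2 : G.Adj (S.head hS) (D.head hD))
    (h3 : ¬ G.Adj (A.getLast hA) (S.head hS)) :
    conf G (A ++ S.reverse ++ D) < conf G (A ++ S ++ D) := by
  rw [conf_triple G A S D hA hS hD, conf_rev_triple G A S D hA hS hD,
    J_eq_zero G h1, J_eq_zero G h2, J_eq_one G h3]
  omega

/-- Variant where the conflict is at the second boundary (lastS, headD). -/
lemma conf_swap₂ (A S D : List V) (hA : A ≠ []) (hS : S ≠ []) (hD : D ≠ [])
    (h1 : G.Adj (A.getLast hA) (S.getLast hS)) (h2 : G.Adj (S.head hS) (D.head hD))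
    (h3 : ¬ G.Adj (S.getLast hS) (D.head hD)) :
    conf G (A ++ S.reverse ++ D) < conf G (A ++ S ++ D) := by
  rw [conf_triple G A S D hA hS hD, conf_rev_triple G A S D hA hS hD,
    J_eq_zero G h1, J_eq_zero G h2, J_eq_one G h3]
  omega

lemma conf_eq_zero_iff (l : List V) : conf G l = 0 ↔ List.Chain' G.Adj l := by
  induction l with
  | nil => simp [List.Chain']
  | cons a l ih =>
    cases l with
    | nil => simp [List.Chain']
    | cons b l' =>
      simp only [List.Chain'] at ih ⊢
      rw [conf_cons_cons, List.isChain_cons_cons, ← ih]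
      unfold J
      by_cases h : G.Adj a b <;> simp [h]

lemma conf_ne_zero_decomp (l : List V) (h : conf G l ≠ 0) :
    ∃ (X : List V) (a b : V) (Y : List V), l = X ++ a :: b :: Y ∧ ¬ G.Adj a b := by
  induction l with
  | nil => simp [conf] at h
  | cons a l ih =>
    cases l with
    | nil => simp [conf] at h
    | cons b l' =>
      by_cases hab : G.Adj a b
      · have : conf G (b :: l') ≠ 0 := by
          rw [conf_cons_cons, J_eq_zero G hab] at h
          simpa using h
        obtain ⟨X, c, d, Y, hdec, hcd⟩ := ih this
        exact ⟨a :: X, c, d, Y, by rw [hdec]; rfl, hcd⟩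
      · exact ⟨[], a, b, l', rfl, hab⟩

-- ### zip decomposition machinery

lemma zip_tail_cons {x : V} {M : List V} (h : M ≠ []) :
    (x :: M).zip (x :: M).tail = (x, M.head h) :: M.zip M.tail := by
  cases M with
  | nil => simp at h
  | cons y M' => rfl

lemma mem_zip_decomp : ∀ {l : List V} {c d : V}, (c, d) ∈ l.zip l.tail →
    ∃ U W, l = U ++ c :: d :: W := by
  intro l
  induction l with
  | nil => intro c d h; simp at h
  | cons x M ih =>
    intro c d h
    cases M with
    | nil => simp at h
    | cons y M' =>
      rw [zip_tail_cons (by simp : (y :: M') ≠ [])] at h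
      rcases List.mem_cons.mp h with h1 | h2
      · obtain ⟨hc, hd⟩ := Prod.mk.injEq .. ▸ h1
        refine ⟨[], M', ?_⟩
        simp at h1
        rw [h1.1, h1.2]
        rfl
      · obtain ⟨U, W, hUW⟩ := ih h2
        exact ⟨x :: U, W, by rw [hUW]; rfl⟩

lemma pair_mem_zip : ∀ (X : List V) (a b : V) (Y : List V),
    (a, b) ∈ ((X ++ a :: b :: Y).zip (X ++ a :: b :: Y).tail) := by
  intro X
  induction X with
  | nil =>
    intro a b Y
    simp only [List.nil_append]
    rw [zip_tail_cons (by simp : (b :: Y) ≠ [])]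
    simp
  | cons x X' ih =>
    intro a b Y
    have hM : X' ++ a :: b :: Y ≠ [] := by simp
    rw [List.cons_append, zip_tail_cons hM]
    exact List.mem_cons_of_mem _ (ih a b Y)

lemma decomp_cases : ∀ (X₀ : List V) {Y₀ : List V} {a b c d : V},
    (c, d) ∈ ((X₀ ++ a :: b :: Y₀).zip (X₀ ++ a :: b :: Y₀).tail) →
    c ≠ a → c ≠ b → d ≠ a →
    (∃ X₁ X₂, X₀ = X₁ ++ c :: d :: X₂) ∨ (∃ Y₁ Y₂, Y₀ = Y₁ ++ c :: d :: Y₂) := by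
  intro X₀
  induction X₀ with
  | nil =>
    intro Y₀ a b c d h hca hcb hda
    simp only [List.nil_append] at h
    rw [zip_tail_cons (by simp : (b :: Y₀) ≠ [])] at h
    rcases List.mem_cons.mp h with h1 | h2
    · simp at h1; exact absurd h1.1 hca
    · cases Y₀ with
      | nil => simp at h2
      | cons y Y' =>
        rw [zip_tail_cons (by simp : (y :: Y') ≠ [])] at h2
        rcases List.mem_cons.mp h2 with h3 | h4
        · simp at h3; exact absurd h3.1 hcb
        · obtain ⟨U, W, hUW⟩ := mem_zip_decomp h4
          exact Or.inr ⟨U, W, hUW⟩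
  | cons x X' ih =>
    intro Y₀ a b c d h hca hcb hda
    have hM : X' ++ a :: b :: Y₀ ≠ [] := by simp
    rw [List.cons_append, zip_tail_cons hM] at h
    rcases List.mem_cons.mp h with h1 | h2
    · simp only [Prod.mk.injEq] at h1
      obtain ⟨hcx, hdh⟩ := h1
      cases X' with
      | nil =>
        exfalso; apply hda; rw [hdh]; rfl
      | cons x' X'' =>
        left
        refine ⟨[], X'', ?_⟩
        have hx' : (x' :: X'' ++ a :: b :: Y₀ : List V).head hM = x' := rfl
        rw [hcx, hdh, hx']
        rfl
    · rcases ih h2 hca hcb hda with ⟨X₁, X₂, hX⟩ | hY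
      · exact Or.inl ⟨x :: X₁, X₂, by rw [hX]; rfl⟩
      · exact Or.inr hY

lemma zip_map_snd (l : List V) : (l.zip l.tail).map Prod.snd = l.tail := by
  induction l with
  | nil => rfl
  | cons x M ih =>
    cases M with
    | nil => rfl
    | cons y M' =>
      rw [zip_tail_cons (by simp : (y :: M') ≠ [])]
      simp only [List.map_cons]
      rw [ih]
      rfl

lemma zip_map_fst (l : List V) : (l.zip l.tail).map Prod.fst = l.dropLast := by
  induction l with
  | nil => rfl
  | cons x M ih =>
    cases M with
    | nil => rfl
    | cons y M' =>
      rw [zip_tail_cons (by simp : (y :: M') ≠ [])]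
      simp only [List.map_cons]
      rw [ih, List.dropLast_cons₂]

lemma zip_tail_nodup {l : List V} (h : l.Nodup) : (l.zip l.tail).Nodup := by
  have h1 : ((l.zip l.tail).map Prod.fst).Nodup := by
    rw [zip_map_fst]; exact h.sublist (List.dropLast_sublist l)
  exact h1.of_map Prod.fst

lemma zip_tail_length (l : List V) : (l.zip l.tail).length + 1 = l.length ∨ l = [] := by
  cases l with
  | nil => right; rfl
  | cons x M =>
    left
    simp [List.length_zip]

end ConfDef

-- ### helpers on head?/getLast? and getLast

lemma head?_append_left (A u : List V) (hA : A ≠ []) : (A ++ u).head? = A.head? := by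
  cases A with
  | nil => simp at hA
  | cons a A' => rfl

lemma getLast?_append_right (u D : List V) (hD : D ≠ []) : (u ++ D).getLast? = D.getLast? := by
  rw [List.getLast?_append]
  cases D with
  | nil => simp at hD
  | cons d D' =>
    have : (d :: D').getLast?.isSome := by
      rw [List.getLast?_isSome]; simp
    rcases Option.isSome_iff_exists.mp this with ⟨x, hx⟩
    rw [hx]; rfl

lemma getLast_append_last (A : List V) (a : V) (h : A ++ [a] ≠ []) :
    (A ++ [a]).getLast h = a := by
  rw [List.getLast_append_of_ne_nil (l' := [a]) _ (by simp)]
  rfl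

section Counting
variable [Fintype V] [DecidableEq V] (G : SimpleGraph V) [DecidableRel G.Adj]

lemma exists_good (k : ℕ)
    (hk : ∀ v : V, (univ.filter fun u => ¬ G.Adj v u).card ≤ k)
    {l : List V} (hnd : l.Nodup) (hlen : 2 * k + 1 ≤ l.length)
    {a b : V} (hab : (a, b) ∈ l.zip l.tail) (hnadj : ¬ G.Adj a b) :
    ∃ c d, (c, d) ∈ l.zip l.tail ∧ G.Adj a c ∧ G.Adj b d := by
  by_contra hcon
  push_neg at hcon
  set Z : Finset (V × V) := (l.zip l.tail).toFinset with hZ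
  have hZnd : (l.zip l.tail).Nodup := zip_tail_nodup hnd
  have hZcard : Z.card = (l.zip l.tail).length := List.toFinset_card_of_nodup hZnd
  have hlen2 : (l.zip l.tail).length + 1 = l.length := by
    rcases zip_tail_length l with h | h
    · exact h
    · rw [h] at hlen; simp at hlen
  set badF : Finset (V × V) := Z.filter (fun p => ¬ G.Adj a p.1) with hbF
  set badS : Finset (V × V) := Z.filter (fun p => ¬ G.Adj b p.2) with hbS
  have habZ : (a, b) ∈ Z := List.mem_toFinset.mpr hab
  have habS : (a, b) ∈ badS := by
    rw [hbS, mem_filter]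
    exact ⟨habZ, by simp⟩
  have hsub : Z ⊆ badF ∪ (badS.erase (a, b)) := by
    intro p hp
    by_cases hpa : G.Adj a p.1
    · have hpb : ¬ G.Adj b p.2 := by
        have hpz : (p.1, p.2) ∈ l.zip l.tail := by
          have := List.mem_toFinset.mp (hZ ▸ hp)
          simpa using this
        exact hcon p.1 p.2 hpz hpa
      have hpne : p ≠ (a, b) := by
        intro h
        rw [h] at hpa
        exact (G.irrefl hpa)
      exact mem_union_right _ (mem_erase.mpr ⟨hpne, mem_filter.mpr ⟨hp, hpb⟩⟩)
    · exact mem_union_left _ (mem_filter.mpr ⟨hp, hpa⟩)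
  have hinj : ∀ p ∈ Z, ∀ q ∈ Z, p.1 = q.1 → p = q := by
    intro p hp q hq h1
    have hmap : ((l.zip l.tail).map Prod.fst).Nodup := by
      rw [zip_map_fst]; exact hnd.sublist (List.dropLast_sublist l)
    exact List.inj_on_of_nodup_map hmap (List.mem_toFinset.mp hp) (List.mem_toFinset.mp hq) h1
  have hinj2 : ∀ p ∈ Z, ∀ q ∈ Z, p.2 = q.2 → p = q := by
    intro p hp q hq h1
    have hmap : ((l.zip l.tail).map Prod.snd).Nodup := by
      rw [zip_map_snd]; exact hnd.sublist (List.tail_sublist l)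
    exact List.inj_on_of_nodup_map hmap (List.mem_toFinset.mp hp) (List.mem_toFinset.mp hq) h1
  have hbFcard : badF.card ≤ k := by
    calc badF.card ≤ (univ.filter fun u => ¬ G.Adj a u).card := by
          apply Finset.card_le_card_of_injOn Prod.fst
          · intro p hp
            rw [hbF, mem_coe, mem_filter] at hp
            exact mem_coe.mpr (mem_filter.mpr ⟨mem_univ _, hp.2⟩)
          · intro p hp q hq h
            exact hinj p (mem_of_mem_filter p hp) q (mem_of_mem_filter q hq) h
      _ ≤ k := hk a
  have hbScard : badS.card ≤ k := by
    calc badS.card ≤ (univ.filter fun u => ¬ G.Adj b u).card := by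
          apply Finset.card_le_card_of_injOn Prod.snd
          · intro p hp
            rw [hbS, mem_coe, mem_filter] at hp
            exact mem_coe.mpr (mem_filter.mpr ⟨mem_univ _, hp.2⟩)
          · intro p hp q hq h
            exact hinj2 p (mem_of_mem_filter p hp) q (mem_of_mem_filter q hq) h
      _ ≤ k := hk b
  have hcard : Z.card ≤ badF.card + (badS.erase (a, b)).card :=
    le_trans (Finset.card_le_card hsub) (Finset.card_union_le _ _)
  have herase : (badS.erase (a, b)).card + 1 = badS.card :=
    Finset.card_erase_add_one habS
  omega

end Counting

lemma head?_append_left₂ (A u w : List V) (hA : A ≠ []) :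
    (A ++ u ++ w).head? = A.head? := by
  rw [head?_append_left (A ++ u) w (by simp [hA]), head?_append_left A u hA]

section Reduce
variable [Fintype V] [DecidableEq V] (G : SimpleGraph V) [DecidableRel G.Adj]

lemma conf_reduce (k : ℕ)
    (hk : ∀ v : V, (univ.filter fun u => ¬ G.Adj v u).card ≤ k)
    (l : List V) (hnd : l.Nodup) (hlen : 2 * k + 1 ≤ l.length) (hc : conf G l ≠ 0) :
    ∃ l' : List V, l'.Perm l ∧ l'.head? = l.head? ∧ l'.getLast? = l.getLast? ∧
      conf G l' < conf G l := by
  obtain ⟨X₀, a, b, Y₀, hdec, hab⟩ := conf_ne_zero_decomp G l hc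
  have hzip : (a, b) ∈ l.zip l.tail := by rw [hdec]; exact pair_mem_zip X₀ a b Y₀
  obtain ⟨c, d, hcd, hac, hbd⟩ := exists_good G k hk hnd hlen hzip hab
  have hca : c ≠ a := (G.ne_of_adj hac).symm
  have hcb : c ≠ b := fun h => hab (h ▸ hac)
  have hda : d ≠ a := fun h => hab ((h ▸ hbd).symm)
  rw [hdec] at hcd
  rcases decomp_cases X₀ hcd hca hcb hda with ⟨X₁, X₂, hX⟩ | ⟨Y₁, Y₂, hY⟩
  · -- good pair to the left of the conflict
    set A : List V := X₁ ++ [c] with hA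
    set S : List V := d :: (X₂ ++ [a]) with hS
    set D : List V := b :: Y₀ with hD
    have hAne : A ≠ [] := by simp [hA]
    have hSne : S ≠ [] := by simp [hS]
    have hDne : D ≠ [] := by simp [hD]
    have hl : l = A ++ S ++ D := by
      rw [hdec, hX, hA, hS, hD]; simp
    have hlastA : A.getLast hAne = c := getLast_append_last X₁ c _
    have hlastS : S.getLast hSne = a := by
      have e : S = (d :: X₂) ++ [a] := by rw [hS]; simp
      rw [List.getLast_congr hSne (by simp) e, getLast_append_last (d :: X₂) a _]
    have hheadS : S.head hSne = d := rfl
    have hheadD : D.head hDne = b := rfl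
    refine ⟨A ++ S.reverse ++ D, ?_, ?_, ?_, ?_⟩
    · rw [hl]
      exact (S.reverse_perm.append_left A).append_right D
    · have h1 := head?_append_left₂ A S.reverse D hAne
      have h2 := head?_append_left₂ A S D hAne
      rw [hl, h1, h2]
    · have h1 := getLast?_append_right (A ++ S.reverse) D hDne
      have h2 := getLast?_append_right (A ++ S) D hDne
      rw [hl, h1, h2]
    · rw [hl]
      apply conf_swap₂ G A S D hAne hSne hDne
      · rw [hlastA, hlastS]; exact hac.symm
      · rw [hheadS, hheadD]; exact hbd.symm
      · rw [hlastS, hheadD]; exact hab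
  · -- good pair to the right of the conflict
    set A : List V := X₀ ++ [a] with hA
    set S : List V := b :: (Y₁ ++ [c]) with hS
    set D : List V := d :: Y₂ with hD
    have hAne : A ≠ [] := by simp [hA]
    have hSne : S ≠ [] := by simp [hS]
    have hDne : D ≠ [] := by simp [hD]
    have hl : l = A ++ S ++ D := by
      rw [hdec, hY, hA, hS, hD]; simp
    have hlastA : A.getLast hAne = a := getLast_append_last X₀ a _
    have hlastS : S.getLast hSne = c := by
      have e : S = (b :: Y₁) ++ [c] := by rw [hS]; simp
      rw [List.getLast_congr hSne (by simp) e, getLast_append_last (b :: Y₁) c _]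
    have hheadS : S.head hSne = b := rfl
    have hheadD : D.head hDne = d := rfl
    refine ⟨A ++ S.reverse ++ D, ?_, ?_, ?_, ?_⟩
    · rw [hl]
      exact (S.reverse_perm.append_left A).append_right D
    · have h1 := head?_append_left₂ A S.reverse D hAne
      have h2 := head?_append_left₂ A S D hAne
      rw [hl, h1, h2]
    · have h1 := getLast?_append_right (A ++ S.reverse) D hDne
      have h2 := getLast?_append_right (A ++ S) D hDne
      rw [hl, h1, h2]
    · rw [hl]
      apply conf_swap₁ G A S D hAne hSne hDne
      · rw [hlastA, hlastS]; exact hac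
      · rw [hheadS, hheadD]; exact hbd
      · rw [hlastA, hheadS]; exact hab

end Reduce

section Arrange
variable [Fintype V] [DecidableEq V] (G : SimpleGraph V) [DecidableRel G.Adj]

lemma arrange (k : ℕ)
    (hk : ∀ v : V, (univ.filter fun u => ¬ G.Adj v u).card ≤ k)
    (B : Finset V) (hcard : 2 * k + 1 ≤ B.card) (s t : V)
    (hs : s ∈ B) (ht : t ∈ B) (hst : s ≠ t) :
    ∃ l : List V, l.Nodup ∧ l.toFinset = B ∧ l.head? = some s ∧
      l.getLast? = some t ∧ List.Chain' G.Adj l := by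
  classical
  set mid : List V := ((B.erase s).erase t).toList with hmid
  have hmidf : mid.toFinset = (B.erase s).erase t := Finset.toList_toFinset _
  set l₀ : List V := s :: (mid ++ [t]) with hl₀
  have hsmid : s ∉ mid := by
    intro h
    have := hmidf ▸ List.mem_toFinset.mpr h
    exact Finset.notMem_erase s B (Finset.mem_of_mem_erase this)
  have htmid : t ∉ mid := by
    intro h
    have := hmidf ▸ List.mem_toFinset.mpr h
    exact Finset.notMem_erase t (B.erase s) this
  have hnd0 : l₀.Nodup := by
    rw [hl₀]
    refine List.nodup_cons.mpr ⟨?_, ?_⟩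
    · simp only [List.mem_append, List.mem_singleton]
      rintro (h | h)
      · exact hsmid h
      · exact hst h
    · refine List.Nodup.append (Finset.nodup_toList _) (List.nodup_singleton t) ?_
      intro x hx hx'
      rw [List.mem_singleton] at hx'
      subst hx'
      exact htmid hx
  have hfin0 : l₀.toFinset = B := by
    rw [hl₀]
    ext x
    simp only [List.toFinset_cons, List.toFinset_append, List.toFinset_cons,
      List.toFinset_nil, insert_empty_eq, Finset.mem_insert, Finset.mem_union,
      List.mem_toFinset, hmidf, Finset.mem_erase]
    by_cases hx1 : x = s <;> by_cases hx2 : x = t <;> simp [hx1, hx2, hs, ht] <;> tauto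
  have hh0 : l₀.head? = some s := rfl
  have hg0 : l₀.getLast? = some t := by
    rw [hl₀]
    have : (s :: (mid ++ [t]) : List V) = (s :: mid) ++ [t] := by simp
    rw [this, getLast?_append_right _ [t] (by simp)]
    rfl
  -- now reduce conflicts
  have main : ∀ (N : ℕ) (l : List V), conf G l ≤ N → l.Nodup → l.toFinset = B →
      l.head? = some s → l.getLast? = some t →
      ∃ l' : List V, l'.Nodup ∧ l'.toFinset = B ∧ l'.head? = some s ∧
        l'.getLast? = some t ∧ List.Chain' G.Adj l' := by
    intro N
    induction N with
    | zero =>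
      intro l hc hnd hf hh hg
      exact ⟨l, hnd, hf, hh, hg, (conf_eq_zero_iff G l).mp (Nat.le_zero.mp hc)⟩
    | succ N ih =>
      intro l hc hnd hf hh hg
      by_cases hc0 : conf G l = 0
      · exact ⟨l, hnd, hf, hh, hg, (conf_eq_zero_iff G l).mp hc0⟩
      · have hlen : 2 * k + 1 ≤ l.length := by
          have : l.toFinset.card = l.length := List.toFinset_card_of_nodup hnd
          rw [hf] at this
          omega
        obtain ⟨l', hperm, hh', hg', hlt⟩ := conf_reduce G k hk l hnd hlen hc0
        exact ih l' (by omega) (hperm.nodup_iff.mpr hnd) (by ext x; rw [← hf]; simp [List.mem_toFinset, hperm.mem_iff])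
          (by rw [hh', hh]) (by rw [hg', hg])
  exact main (conf G l₀) l₀ le_rfl hnd0 hfin0 hh0 hg0

lemma walk_of_list : ∀ (l : List V) (a z : V), List.Chain' G.Adj l →
    l.head? = some a → l.getLast? = some z → ∃ w : G.Walk a z, w.support = l := by
  intro l
  induction l with
  | nil => intro a z _ hh _; simp at hh
  | cons x l' ih =>
    intro a z hch hh hg
    have hax : a = x := by simp at hh; exact hh.symm
    subst hax
    cases l' with
    | nil =>
      have hz : z = a := by simp at hg; exact hg.symm
      subst hz
      exact ⟨SimpleGraph.Walk.nil, rfl⟩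
    | cons y l'' =>
      simp only [List.Chain', List.isChain_cons_cons] at hch
      have hg' : (y :: l'').getLast? = some z := by
        rw [← hg]; exact (List.getLast?_cons_cons ..).symm
      obtain ⟨w', hw'⟩ := ih y z hch.2 rfl hg'
      exact ⟨SimpleGraph.Walk.cons hch.1 w', by simp [hw']⟩

end Arrange

section Middles
variable [Fintype V] [DecidableEq V] (G : SimpleGraph V) [DecidableRel G.Adj]

lemma choose_middles (k : ℕ)
    (hk : ∀ v : V, (univ.filter fun u => ¬ G.Adj v u).card ≤ k)
    (hcard : 5 * k ≤ Fintype.card V + 2)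
    {r : ℕ} (s t : Fin r → V) :
    ∀ (L : List (Fin r)) (used : Finset V),
      (∀ i ∈ L, s i ∈ used ∧ t i ∈ used) →
      used.card + L.length + 1 ≤ 3 * k →
      ∃ f : Fin r → V,
        (∀ i ∈ L, G.Adj (s i) (f i) ∧ G.Adj (t i) (f i) ∧ f i ∉ used) ∧
        (∀ i ∈ L, ∀ j ∈ L, i ≠ j → f i ≠ f j) := by
  intro L
  induction L with
  | nil =>
    intro used _ _
    exact ⟨fun i => s i, by simp, by simp⟩
  | cons i L' ih =>
    intro used hmem hsize
    set common : Finset V := univ.filter (fun u => G.Adj (s i) u ∧ G.Adj (t i) u) with hcom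
    have hunivsub : (univ : Finset V) ⊆ common ∪
        ((univ.filter fun u => ¬ G.Adj (s i) u) ∪ (univ.filter fun u => ¬ G.Adj (t i) u)) := by
      intro x _
      by_cases h1 : G.Adj (s i) x
      · by_cases h2 : G.Adj (t i) x
        · exact mem_union_left _ (by rw [hcom]; exact mem_filter.mpr ⟨mem_univ _, h1, h2⟩)
        · exact mem_union_right _ (mem_union_right _ (mem_filter.mpr ⟨mem_univ _, h2⟩))
      · exact mem_union_right _ (mem_union_left _ (mem_filter.mpr ⟨mem_univ _, h1⟩))
    have hcommon : Fintype.card V ≤ common.card + 2 * k := by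
      have h1 := Finset.card_le_card hunivsub
      have h2 := Finset.card_union_le common
        ((univ.filter fun u => ¬ G.Adj (s i) u) ∪ (univ.filter fun u => ¬ G.Adj (t i) u))
      have h3 := Finset.card_union_le (univ.filter fun u => ¬ G.Adj (s i) u)
        (univ.filter fun u => ¬ G.Adj (t i) u)
      have h4 := hk (s i)
      have h5 := hk (t i)
      have h6 : (univ : Finset V).card = Fintype.card V := Finset.card_univ
      omega
    have hne : (common \ used).Nonempty := by
      rw [Finset.sdiff_nonempty]
      intro hsub
      have hsi : s i ∈ used := (hmem i List.mem_cons_self).1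
      have hsinc : s i ∉ common := by
        rw [hcom]
        simp only [mem_filter]
        rintro ⟨-, h1, -⟩
        exact G.irrefl h1
      have hsub2 : common ⊆ used.erase (s i) := by
        intro x hx
        exact mem_erase.mpr ⟨fun h => hsinc (h ▸ hx), hsub hx⟩
      have h7 : common.card ≤ (used.erase (s i)).card := Finset.card_le_card hsub2
      have h8 : (used.erase (s i)).card + 1 = used.card := Finset.card_erase_add_one hsi
      have h9 : used.card + 2 ≤ 3 * k := by
        have := hsize
        simp only [List.length_cons] at this
        omega
      omega
    obtain ⟨m, hm⟩ := hne
    have hmc : m ∈ common := (Finset.mem_sdiff.mp hm).1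
    have hmu : m ∉ used := (Finset.mem_sdiff.mp hm).2
    have hmadj : G.Adj (s i) m ∧ G.Adj (t i) m := by
      rw [hcom] at hmc
      exact (mem_filter.mp hmc).2
    obtain ⟨f', hf'1, hf'2⟩ := ih (insert m used)
      (fun j hj => ⟨mem_insert_of_mem (hmem j (List.mem_cons_of_mem i hj)).1,
        mem_insert_of_mem (hmem j (List.mem_cons_of_mem i hj)).2⟩)
      (by
        have h1 := Finset.card_insert_le m used
        simp only [List.length_cons] at hsize
        omega)
    refine ⟨fun j => if j = i then m else f' j, ?_, ?_⟩
    · intro j hj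
      by_cases hji : j = i
      · subst hji
        simp only [if_pos rfl]
        exact ⟨hmadj.1, hmadj.2, hmu⟩
      · have hj' : j ∈ L' := by
          rcases List.mem_cons.mp hj with h | h
          · exact absurd h hji
          · exact h
        simp only [if_neg hji]
        have := hf'1 j hj'
        exact ⟨this.1, this.2.1, fun hmem' => this.2.2 (mem_insert_of_mem hmem')⟩
    · intro a ha b hb hab
      have hmemL : ∀ c, c ∈ i :: L' → c ≠ i → c ∈ L' := by
        intro c hc hci
        rcases List.mem_cons.mp hc with h | h
        · exact absurd h hci
        · exact h
      by_cases hai : a = i <;> by_cases hbi : b = i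
      · exact absurd (hai.trans hbi.symm) hab
      · simp only [if_pos hai, if_neg hbi]
        intro h
        exact (hf'1 b (hmemL b hb hbi)).2.2 (h ▸ mem_insert_self m used)
      · simp only [if_neg hai, if_pos hbi]
        intro h
        exact (hf'1 a (hmemL a ha hai)).2.2 (h.symm ▸ mem_insert_self m used)
      · simp only [if_neg hai, if_neg hbi]
        exact hf'2 a (hmemL a ha hai) b (hmemL b hb hbi) hab

end Middles

end RC

open Finset in
/-- **Rerouting lemma.** Let `G` be an `n`-vertex graph and `k ≥ 1` with
`δ(G) ≥ max {5k - 3, n - k}`. Given `r ≤ k` pairs `{s i, t i}` of vertices that are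
pairwise disjoint (for `i ≠ j` the pairs share no vertex; `s i = t i` is allowed),
with `s i ≠ t i` for at least one index `i`, there is a family of pairwise
vertex-disjoint paths `P i` from `s i` to `t i` covering all vertices of `G`. -/
theorem rerouting_cover {V : Type*} [Fintype V] (G : SimpleGraph V) [DecidableRel G.Adj]
    (k r : ℕ) (hk : 1 ≤ k) (hr : r ≤ k)
    (hδ : max (5 * k - 3) (Fintype.card V - k) ≤ G.minDegree)
    (s t : Fin r → V)
    (hdisj : ∀ i j : Fin r, i ≠ j →
      s i ≠ s j ∧ s i ≠ t j ∧ t i ≠ s j ∧ t i ≠ t j)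
    (hne : ∃ i, s i ≠ t i) :
    ∃ P : (i : Fin r) → G.Walk (s i) (t i),
      (∀ i, (P i).IsPath) ∧
      (∀ i j : Fin r, i ≠ j → ∀ x : V, x ∈ (P i).support → x ∉ (P j).support) ∧
      (∀ x : V, ∃ i, x ∈ (P i).support) := by
  classical
  obtain ⟨i0, hi0⟩ := hne
  haveI : Nonempty V := ⟨s i0⟩
  have hδ1 : 5 * k - 3 ≤ G.minDegree := le_trans (le_max_left _ _) hδ
  have hδ2 : Fintype.card V - k ≤ G.minDegree := le_trans (le_max_right _ _) hδ
  have hkcard : ∀ v : V, ((univ : Finset V).filter fun u => ¬ G.Adj v u).card ≤ k := by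
    intro v
    have h1 : G.minDegree ≤ G.degree v := G.minDegree_le_degree v
    have h2 : G.degree v = (univ.filter (G.Adj v)).card := by
      rw [← SimpleGraph.neighborFinset_eq_filter]
      rfl
    have h3 : (univ.filter (G.Adj v)).card + (univ.filter fun u => ¬ G.Adj v u).card
        = Fintype.card V := by
      rw [Finset.card_filter_add_card_filter_not]
      exact Finset.card_univ
    omega
  have hn5 : 5 * k ≤ Fintype.card V + 2 := by
    have h1 : G.minDegree ≤ G.degree (s i0) := G.minDegree_le_degree _
    have h2 : G.degree (s i0) < Fintype.card V := G.degree_lt_card_verts _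
    omega
  have hr1 : 1 ≤ r := i0.pos
  set pins : Finset V := (univ.image s) ∪ (univ.image t) with hpins
  have hspin : ∀ i : Fin r, s i ∈ pins :=
    fun i => mem_union_left _ (mem_image_of_mem s (mem_univ i))
  have htpin : ∀ i : Fin r, t i ∈ pins :=
    fun i => mem_union_right _ (mem_image_of_mem t (mem_univ i))
  have hpincard : pins.card ≤ 2 * r := by
    rw [hpins]
    have h1 := Finset.card_union_le (univ.image s) (univ.image t)
    have h2 := Finset.card_image_le (s := (univ : Finset (Fin r))) (f := s)
    have h3 := Finset.card_image_le (s := (univ : Finset (Fin r))) (f := t)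
    simp only [Finset.card_univ, Fintype.card_fin] at h2 h3
    omega
  set Lset : Finset (Fin r) := univ.filter (fun i => i ≠ i0 ∧ s i ≠ t i) with hLset
  set L : List (Fin r) := Lset.toList with hLdef
  have hLmem : ∀ i : Fin r, i ∈ L ↔ (i ≠ i0 ∧ s i ≠ t i) := by
    intro i
    rw [hLdef, Finset.mem_toList, hLset, mem_filter]
    simp
  have hLlen : L.length + 1 ≤ r := by
    have h1 : Lset ⊆ univ.erase i0 := by
      intro i hi
      rw [hLset, mem_filter] at hi
      exact mem_erase.mpr ⟨hi.2.1, mem_univ _⟩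
    have h2 := Finset.card_le_card h1
    have h3 : (univ.erase i0).card + 1 = r := by
      rw [Finset.card_erase_add_one (mem_univ i0), Finset.card_univ, Fintype.card_fin]
    have h4 : L.length = Lset.card := Finset.length_toList _
    omega
  obtain ⟨f, hf1, hf2⟩ := RC.choose_middles G k hkcard hn5 s t L pins
    (fun i _ => ⟨hspin i, htpin i⟩) (by omega)
  set SU : Finset V := (univ.filter (fun i : Fin r => i ≠ i0)).biUnion
    (fun i => if s i = t i then {s i} else {s i, f i, t i}) with hSUdef
  have hSUcard : SU.card ≤ 3 * (r - 1) := by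
    rw [hSUdef]
    have h1 := Finset.card_biUnion_le (s := univ.filter (fun i : Fin r => i ≠ i0))
      (t := fun i => if s i = t i then ({s i} : Finset V) else {s i, f i, t i})
    have h2 : ∀ i ∈ univ.filter (fun i : Fin r => i ≠ i0),
        (if s i = t i then ({s i} : Finset V) else {s i, f i, t i}).card ≤ 3 := by
      intro i _
      by_cases h : s i = t i
      · rw [if_pos h]; simp
      · rw [if_neg h]
        calc ({s i, f i, t i} : Finset V).card
            ≤ ({f i, t i} : Finset V).card + 1 := Finset.card_insert_le _ _
          _ ≤ (({t i} : Finset V).card + 1) + 1 := by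
              have := Finset.card_insert_le (f i) ({t i} : Finset V)
              omega
          _ ≤ 3 := by simp
    have h3 := Finset.sum_le_card_nsmul _ _ 3 h2
    have h4 : (univ.filter (fun i : Fin r => i ≠ i0)).card = r - 1 := by
      have : univ.filter (fun i : Fin r => i ≠ i0) = univ.erase i0 := by
        ext j; simp [Finset.mem_erase, and_comm]
      rw [this, Finset.card_erase_of_mem (mem_univ i0), Finset.card_univ, Fintype.card_fin]
    rw [h4] at h3
    simp only [smul_eq_mul] at h3
    omega
  set B : Finset V := univ \ SU with hBdef
  have hBSU : ∀ x, x ∈ B ↔ x ∉ SU := by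
    intro x
    rw [hBdef, Finset.mem_sdiff]
    simp
  have hnoti0 : ∀ x, (x = s i0 ∨ x = t i0) → x ∉ SU := by
    intro x hx hmem
    rw [hSUdef, Finset.mem_biUnion] at hmem
    obtain ⟨i, hiF, hxi⟩ := hmem
    have hi : i ≠ i0 := (mem_filter.mp hiF).2
    obtain ⟨hd1, hd2, hd3, hd4⟩ := hdisj i i0 hi
    by_cases h2 : s i = t i
    · rw [if_pos h2, Finset.mem_singleton] at hxi
      rcases hx with rfl | rfl
      · exact hd1 hxi.symm
      · exact hd2 hxi.symm
    · rw [if_neg h2] at hxi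
      simp only [Finset.mem_insert, Finset.mem_singleton] at hxi
      have hfi : f i ∉ pins := (hf1 i ((hLmem i).mpr ⟨hi, h2⟩)).2.2
      rcases hxi with h | h | h
      · rcases hx with rfl | rfl
        · exact hd1 h.symm
        · exact hd2 h.symm
      · rcases hx with rfl | rfl
        · exact hfi (h ▸ hspin i0)
        · exact hfi (h ▸ htpin i0)
      · rcases hx with rfl | rfl
        · exact hd3 h.symm
        · exact hd4 h.symm
  have hBcard : 2 * k + 1 ≤ B.card := by
    have h1 : B.card = Fintype.card V - SU.card := by
      rw [hBdef, Finset.card_sdiff_of_subset (Finset.subset_univ _), Finset.card_univ]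
    have h2 : SU.card ≤ Fintype.card V := by
      rw [← Finset.card_univ]
      exact Finset.card_le_card (Finset.subset_univ _)
    omega
  obtain ⟨l, hlnd, hlfin, hlh, hlg, hlch⟩ := RC.arrange G k hkcard B hBcard (s i0) (t i0)
    ((hBSU _).mpr (hnoti0 _ (Or.inl rfl))) ((hBSU _).mpr (hnoti0 _ (Or.inr rfl))) hi0
  obtain ⟨w, hw⟩ := RC.walk_of_list G l (s i0) (t i0) hlch hlh hlg
  have hadj1 : ∀ i : Fin r, i ≠ i0 → s i ≠ t i → G.Adj (s i) (f i) :=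
    fun i h h2 => (hf1 i ((hLmem i).mpr ⟨h, h2⟩)).1
  have hadj2 : ∀ i : Fin r, i ≠ i0 → s i ≠ t i → G.Adj (f i) (t i) :=
    fun i h h2 => (hf1 i ((hLmem i).mpr ⟨h, h2⟩)).2.1.symm
  have hfpins : ∀ i : Fin r, i ≠ i0 → s i ≠ t i → f i ∉ pins :=
    fun i h h2 => (hf1 i ((hLmem i).mpr ⟨h, h2⟩)).2.2
  set P : (i : Fin r) → G.Walk (s i) (t i) := fun i =>
    if h : i = i0 then w.copy (congrArg s h).symm (congrArg t h).symm
    else if h2 : s i = t i then (SimpleGraph.Walk.nil.copy rfl h2)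
    else SimpleGraph.Walk.cons (hadj1 i h h2)
      (SimpleGraph.Walk.cons (hadj2 i h h2) SimpleGraph.Walk.nil) with hPdef
  have hsupp0 : (P i0).support = l := by
    simp only [hPdef, dif_pos rfl]
    rw [SimpleGraph.Walk.support_copy, hw]
  have hsuppT : ∀ i, (h : i ≠ i0) → (h2 : s i = t i) → (P i).support = [s i] := by
    intro i h h2
    simp only [hPdef, dif_neg h, dif_pos h2]
    rw [SimpleGraph.Walk.support_copy]
    rfl
  have hsuppS : ∀ i, (h : i ≠ i0) → (h2 : s i ≠ t i) → (P i).support = [s i, f i, t i] := by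
    intro i h h2
    simp only [hPdef, dif_neg h, dif_neg h2]
    simp [SimpleGraph.Walk.support_cons]
  have hmemsup : ∀ i, i ≠ i0 → ∀ x, x ∈ (P i).support →
      (x = s i ∨ x = t i ∨ (s i ≠ t i ∧ x = f i)) := by
    intro i h x hx
    by_cases h2 : s i = t i
    · rw [hsuppT i h h2] at hx
      simp at hx
      exact Or.inl hx
    · rw [hsuppS i h h2] at hx
      simp at hx
      rcases hx with h3 | h3 | h3
      · exact Or.inl h3
      · exact Or.inr (Or.inr ⟨h2, h3⟩)
      · exact Or.inr (Or.inl h3)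
  have hsubSU : ∀ i, i ≠ i0 → ∀ x, x ∈ (P i).support → x ∈ SU := by
    intro i h x hx
    rw [hSUdef, Finset.mem_biUnion]
    refine ⟨i, mem_filter.mpr ⟨mem_univ _, h⟩, ?_⟩
    by_cases h2 : s i = t i
    · rw [hsuppT i h h2] at hx
      simp at hx
      rw [if_pos h2, Finset.mem_singleton]
      exact hx
    · rw [hsuppS i h h2] at hx
      simp at hx
      rw [if_neg h2]
      simp only [Finset.mem_insert, Finset.mem_singleton]
      tauto
  have hmemB : ∀ x, x ∈ (P i0).support ↔ x ∈ B := by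
    intro x
    rw [hsupp0, ← hlfin, List.mem_toFinset]
  refine ⟨P, ?_, ?_, ?_⟩
  · -- paths
    intro i
    by_cases h : i = i0
    · subst h
      rw [SimpleGraph.Walk.isPath_def, hsupp0]
      exact hlnd
    · by_cases h2 : s i = t i
      · rw [SimpleGraph.Walk.isPath_def, hsuppT i h h2]
        simp
      · rw [SimpleGraph.Walk.isPath_def, hsuppS i h h2]
        have e1 : s i ≠ f i := (hadj1 i h h2).ne
        have e2 : f i ≠ t i := (hadj2 i h h2).ne
        simp [e1, e2, h2]
  · -- disjoint
    intro i j hij x hxi hxj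
    by_cases hi : i = i0
    · subst hi
      have hxB : x ∈ B := (hmemB x).mp hxi
      have hxSU : x ∈ SU := hsubSU j (fun hj => hij hj.symm) x hxj
      exact ((hBSU x).mp hxB) hxSU
    · by_cases hj : j = i0
      · subst hj
        have hxB : x ∈ B := (hmemB x).mp hxj
        have hxSU : x ∈ SU := hsubSU i hi x hxi
        exact ((hBSU x).mp hxB) hxSU
      · obtain ⟨hd1, hd2, hd3, hd4⟩ := hdisj i j hij
        have hmi := hmemsup i hi x hxi
        have hmj := hmemsup j hj x hxj
        rcases hmi with rfl | rfl | ⟨hnt, rfl⟩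
        · rcases hmj with h | h | ⟨hnt', h⟩
          · exact hd1 h
          · exact hd2 h
          · exact hfpins j hj hnt' (h ▸ hspin i)
        · rcases hmj with h | h | ⟨hnt', h⟩
          · exact hd3 h
          · exact hd4 h
          · exact hfpins j hj hnt' (h ▸ htpin i)
        · rcases hmj with h | h | ⟨hnt', h⟩
          · exact hfpins i hi hnt (h ▸ hspin j)
          · exact hfpins i hi hnt (h ▸ htpin j)
          · exact hf2 i ((hLmem i).mpr ⟨hi, hnt⟩) j ((hLmem j).mpr ⟨hj, hnt'⟩) hij h
  · -- cover
    intro x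
    by_cases hx : x ∈ SU
    · rw [hSUdef, Finset.mem_biUnion] at hx
      obtain ⟨i, hiF, hxi⟩ := hx
      have hi : i ≠ i0 := (mem_filter.mp hiF).2
      refine ⟨i, ?_⟩
      by_cases h2 : s i = t i
      · rw [if_pos h2, Finset.mem_singleton] at hxi
        rw [hsuppT i hi h2]
        simp [hxi]
      · rw [if_neg h2] at hxi
        simp only [Finset.mem_insert, Finset.mem_singleton] at hxi
        rw [hsuppS i hi h2]
        simp only [List.mem_cons, List.mem_singleton, List.not_mem_nil, or_false]
        tauto
    · exact ⟨i0, (hmemB x).mpr ((hBSU x).mpr hx)⟩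
end

section
/- Let G be an n-vertex graph and k a positive integer such that δ(G) ≥ max{5k−3, n−k}. Let {s_1,t_1},…,{s_r,t_r} with r ≤ k be pairs of vertices of G such that distinct pairs are disjoint (i.e., for i ≠ j, {s_i,t_i} ∩ {s_j,t_j} = ∅; within a pair, s_i = t_i is allowed). Then there exists a family of pairwise vertex-disjoint paths P_1,…,P_r in G such that each P_i is an (s_i,t_i)-path with at most 3 vertices. -/
/-!
Every terminal misses at most `k` vertices, so the two ends of a pair have at least `n - 2k`
common neighbours, of which at most `2(r - 1)` are terminals of other pairs. Since
`n > δ(G) ≥ 5k - 3`, each pair keeps at least `r` non-terminal common neighbours, so by Hall's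
theorem the pairs can be given distinct middle vertices `m i`, and `s i, m i, t i` are the paths.
-/

open Finset

theorem Finset.exists_injective_forall_mem_of_card_le {ι α : Type*} [Fintype ι] [DecidableEq α]
    (t : ι → Finset α) (ht : ∀ i, Fintype.card ι ≤ #(t i)) :
    ∃ f : ι → α, Function.Injective f ∧ ∀ i, f i ∈ t i := by
  refine (all_card_le_biUnion_card_iff_exists_injective t).1 fun S => ?_
  obtain rfl | ⟨i, hi⟩ := S.eq_empty_or_nonempty
  · simp
  · calc #S ≤ Fintype.card ι := card_le_univ S
      _ ≤ #(t i) := ht i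
      _ ≤ #(S.biUnion t) := card_le_card (subset_biUnion_of_mem t hi)

section Terminals

variable {ι V : Type*} [Fintype ι] [DecidableEq V]

def terminals (s t : ι → V) : Finset V := univ.image s ∪ univ.image t

theorem card_terminals_sdiff_pair_le (s t : ι → V) (i : ι) :
    #(terminals s t \ {s i, t i}) ≤ 2 * (Fintype.card ι - 1) := by
  classical
  have hsub : terminals s t \ {s i, t i} ⊆ (univ.erase i).image s ∪ (univ.erase i).image t := by
    intro x hx
    simp only [terminals, mem_sdiff, mem_union, mem_image, mem_univ, true_and, mem_insert,
      mem_singleton, mem_erase, and_true] at hx ⊢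
    obtain ⟨⟨j, rfl⟩ | ⟨j, rfl⟩, hx⟩ := hx
    · exact Or.inl ⟨j, by rintro rfl; exact hx (.inl rfl), rfl⟩
    · exact Or.inr ⟨j, by rintro rfl; exact hx (.inr rfl), rfl⟩
  calc #(terminals s t \ {s i, t i})
      ≤ #((univ.erase i).image s) + #((univ.erase i).image t) :=
        (card_le_card hsub).trans (card_union_le _ _)
    _ ≤ #(univ.erase i) + #(univ.erase i) := add_le_add card_image_le card_image_le
    _ = 2 * (Fintype.card ι - 1) := by rw [card_erase_of_mem (mem_univ i), card_univ]; ring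

end Terminals

namespace SimpleGraph

variable {V : Type*} (G : SimpleGraph V)

theorem exists_isPath_support_subset_of_adj {u m v : V} (hum : G.Adj u m) (hmv : G.Adj m v) :
    ∃ p : G.Walk u v, p.IsPath ∧ p.support ⊆ [u, m, v] ∧ p.support.length ≤ 3 := by
  by_cases huv : u = v
  · subst huv
    exact ⟨.nil, by simp⟩
  · refine ⟨.cons hum (.cons hmv .nil), ?_, by simp, by simp⟩
    simp [Walk.isPath_def, huv, hum.ne, hmv.ne]

variable [Fintype V] [DecidableEq V] [DecidableRel G.Adj]

theorem card_sub_two_mul_le_card_inter_neighborFinset {k : ℕ}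
    (hδ : Fintype.card V - k ≤ G.minDegree) (u v : V) :
    Fintype.card V - 2 * k ≤ #(G.neighborFinset u ∩ G.neighborFinset v) := by
  have hunion := card_union_add_card_inter (G.neighborFinset u) (G.neighborFinset v)
  have hle := card_le_univ (G.neighborFinset u ∪ G.neighborFinset v)
  have hu := G.minDegree_le_degree u
  have hv := G.minDegree_le_degree v
  rw [card_neighborFinset_eq_degree, card_neighborFinset_eq_degree] at hunion
  omega

variable {ι : Type*} [Fintype ι]

def freeCommonNeighbors (s t : ι → V) (i : ι) : Finset V :=
  (G.neighborFinset (s i) ∩ G.neighborFinset (t i)) \ terminals s t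

theorem mem_freeCommonNeighbors {s t : ι → V} {i : ι} {x : V} :
    x ∈ G.freeCommonNeighbors s t i ↔
      G.Adj (s i) x ∧ G.Adj x (t i) ∧ ∀ j, s j ≠ x ∧ t j ≠ x := by
  simp [freeCommonNeighbors, terminals, G.adj_comm x (t i), forall_and]
  tauto

theorem card_le_card_freeCommonNeighbors {k : ℕ} (hr : Fintype.card ι ≤ k)
    (hδ : max (5 * k - 3) (Fintype.card V - k) ≤ G.minDegree) (s t : ι → V) (i : ι) :
    Fintype.card ι ≤ #(G.freeCommonNeighbors s t i) := by
  have hX := G.card_sub_two_mul_le_card_inter_neighborFinset (le_of_max_le_right hδ) (s i) (t i)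
  set X := G.neighborFinset (s i) ∩ G.neighborFinset (t i)
  have hXT : X ∩ terminals s t ⊆ terminals s t \ {s i, t i} := by
    intro x hx
    simp only [X, mem_inter, mem_neighborFinset] at hx
    simp only [mem_sdiff, mem_insert, mem_singleton, not_or]
    exact ⟨hx.2, hx.1.1.ne', hx.1.2.ne'⟩
  have hT := (card_le_card hXT).trans (card_terminals_sdiff_pair_le s t i)
  have hsplit := card_sdiff_add_card_inter X (terminals s t)
  have hn := (G.minDegree_le_degree (s i)).trans_lt (G.degree_lt_card_verts (s i))
  have h5k := le_of_max_le_left hδ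
  change Fintype.card ι ≤ #(X \ terminals s t)
  omega

end SimpleGraph

theorem rerouting_short_paths_general {V : Type*} [Fintype V] (G : SimpleGraph V) [DecidableRel G.Adj]
    (k r : ℕ) (hr : r ≤ k)
    (hδ : max (5 * k - 3) (Fintype.card V - k) ≤ G.minDegree)
    (s t : Fin r → V)
    (hdisj : ∀ i j : Fin r, i ≠ j →
      s i ≠ s j ∧ s i ≠ t j ∧ t i ≠ s j ∧ t i ≠ t j) :
    ∃ P : (i : Fin r) → G.Walk (s i) (t i),
      (∀ i, (P i).IsPath) ∧
      (∀ i j : Fin r, i ≠ j → ∀ x : V, x ∈ (P i).support → x ∉ (P j).support) ∧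
      (∀ i, (P i).support.length ≤ 3) := by
  classical
  obtain ⟨m, hm_inj, hm⟩ := exists_injective_forall_mem_of_card_le (G.freeCommonNeighbors s t)
    (G.card_le_card_freeCommonNeighbors (by simpa using hr) hδ s t)
  simp only [SimpleGraph.mem_freeCommonNeighbors] at hm
  choose P hP_path hP_supp hP_len using fun i =>
    G.exists_isPath_support_subset_of_adj (hm i).1 (hm i).2.1
  refine ⟨P, hP_path, fun i j hij x hxi hxj => ?_, hP_len⟩
  obtain ⟨hss, hst, hts, htt⟩ := hdisj i j hij
  have hmm : m i ≠ m j := hm_inj.ne hij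
  have hsm : ∀ a b, s a ≠ m b := fun a b => ((hm b).2.2 a).1
  have htm : ∀ a b, t a ≠ m b := fun a b => ((hm b).2.2 a).2
  have hxi := hP_supp i hxi
  have hxj := hP_supp j hxj
  simp only [List.mem_cons, List.not_mem_nil, or_false] at hxi hxj
  grind

/-- Let `G` be an `n`-vertex graph and `k ≥ 1` with `δ(G) ≥ max {5k - 3, n - k}`.
Given `r ≤ k` pairs `{s i, t i}` of vertices that are pairwise disjoint (for `i ≠ j`
the pairs share no vertex; `s i = t i` is allowed), there is a family of pairwise
vertex-disjoint paths `P i` from `s i` to `t i`, each with at most 3 vertices. -/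
theorem rerouting_short_paths {V : Type*} [Fintype V] (G : SimpleGraph V) [DecidableRel G.Adj]
    (k r : ℕ) (hk : 1 ≤ k) (hr : r ≤ k)
    (hδ : max (5 * k - 3) (Fintype.card V - k) ≤ G.minDegree)
    (s t : Fin r → V)
    (hdisj : ∀ i j : Fin r, i ≠ j →
      s i ≠ s j ∧ s i ≠ t j ∧ t i ≠ s j ∧ t i ≠ t j) :
    ∃ P : (i : Fin r) → G.Walk (s i) (t i),
      (∀ i, (P i).IsPath) ∧
      (∀ i j : Fin r, i ≠ j → ∀ x : V, x ∈ (P i).support → x ∉ (P j).support) ∧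
      (∀ i, (P i).support.length ≤ 3) :=
  rerouting_short_paths_general G k r hr hδ s t hdisj
end

section
/- Let G be an n-vertex graph and k a positive integer such that δ(G) ≥ max{5k−3, n−k}. Then for every two distinct vertices s and t of G, there is a Hamiltonian (s,t)-path in G, i.e., a path from s to t that contains every vertex of G. -/
/-!
The degree condition says every vertex has at most `k - 1` non-neighbours. Grow an `s`–`t` path
one vertex at a time by inserting a new vertex between two consecutive path vertices that are
both adjacent to it. While the path has fewer than `2k` vertices, its first two vertices have a
common neighbour off the path, because `n ≥ 5k - 2`. Once it has at least `2k` vertices, every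
vertex `v` off the path works: its at most `k - 1` non-neighbours on the path meet at most
`2k - 2` of the at least `2k - 1` consecutive pairs, so some pair is adjacent to `v` at both ends.
-/

open Finset

theorem List.length_le_two_mul_countP_add_one {α : Type*} (p : α → Bool) :
    ∀ {l : List α}, l.IsChain (fun a b => p a ∨ p b) → l.length ≤ 2 * l.countP p + 1
  | [], _ => by simp
  | [_], _ => by simp
  | a :: b :: l, h => by
    rw [List.isChain_cons_cons] at h
    by_cases ha : p a
    · have := length_le_two_mul_countP_add_one p h.2
      simp only [List.length_cons, List.countP_cons_of_pos ha] at this ⊢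
      omega
    · have hb : p b := h.1.resolve_left ha
      have := length_le_two_mul_countP_add_one p (l := l) h.2.tail
      simp only [List.length_cons, List.countP_cons_of_neg ha, List.countP_cons_of_pos hb]
      omega

namespace SimpleGraph

section PathSupport

variable {V : Type*} (G : SimpleGraph V)

structure IsPathSupport (s t : V) (l : List V) : Prop where
  nodup : l.Nodup
  isChain : l.IsChain G.Adj
  head?_eq : l.head? = some s
  getLast?_eq : l.getLast? = some t

variable {G} {s t a b w : V} {l l₁ l₂ : List V}

theorem IsPathSupport.exists_isPath (h : G.IsPathSupport s t l) :
    ∃ p : G.Walk s t, p.IsPath ∧ p.support = l := by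
  have hne : l ≠ [] := by rintro rfl; simpa using h.head?_eq
  have hs : l.head hne = s := (List.head_eq_iff_head?_eq_some hne).2 h.head?_eq
  have ht : l.getLast hne = t := (List.getLast_eq_iff_getLast?_eq_some hne).2 h.getLast?_eq
  refine ⟨(Walk.ofSupport l hne h.isChain).copy hs ht, ?_, by simp⟩
  rw [Walk.isPath_def]
  simpa using h.nodup

theorem IsPathSupport.insert_between (h : G.IsPathSupport s t (l₁ ++ a :: b :: l₂))
    (hw : w ∉ l₁ ++ a :: b :: l₂) (ha : G.Adj a w) (hb : G.Adj w b) :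
    G.IsPathSupport s t (l₁ ++ a :: w :: b :: l₂) where
  nodup := by
    have : l₁ ++ a :: w :: b :: l₂ = (l₁ ++ [a]) ++ w :: b :: l₂ := by simp
    rw [this, List.nodup_middle, List.nodup_cons]
    exact ⟨by simpa using hw, by simpa using h.nodup⟩
  isChain := by
    have := h.isChain
    simp only [List.isChain_append_cons_cons, List.isChain_cons_cons] at this ⊢
    exact ⟨this.1, ha, hb, this.2.2⟩
  head?_eq := by
    rw [← h.head?_eq]
    cases l₁ <;> simp
  getLast?_eq := by
    rw [← h.getLast?_eq]
    simp [List.getLast?_append, List.getLast?_cons_cons]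

end PathSupport

variable {V : Type*} [Fintype V] [DecidableEq V] {G : SimpleGraph V} [DecidableRel G.Adj]
  {k : ℕ} {s t : V} {l : List V}

theorem exists_adj_adj_notMem (hG : ∀ v, #(G.neighborFinset v)ᶜ ≤ k) {S : Finset V} {a b : V}
    (ha : a ∈ S) (hb : b ∈ S) (hS : #S + 2 * k < Fintype.card V + 2) :
    ∃ w ∉ S, G.Adj a w ∧ G.Adj b w := by
  by_contra! h
  have hcover : (univ : Finset V) ⊆
      S ∪ (G.neighborFinset a)ᶜ.erase a ∪ (G.neighborFinset b)ᶜ.erase b := by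
    intro w _
    by_cases hw : w ∈ S
    · simp [hw]
    · have hwa : w ≠ a := by rintro rfl; exact hw ha
      have hwb : w ≠ b := by rintro rfl; exact hw hb
      simp only [mem_union, mem_erase, mem_compl, mem_neighborFinset]
      tauto
  have := card_le_card hcover
  have := card_union_le (S ∪ (G.neighborFinset a)ᶜ.erase a) ((G.neighborFinset b)ᶜ.erase b)
  have := card_union_le S ((G.neighborFinset a)ᶜ.erase a)
  have := card_erase_add_one (s := (G.neighborFinset a)ᶜ) (a := a) (by simp)
  have := card_erase_add_one (s := (G.neighborFinset b)ᶜ) (a := b) (by simp)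
  have := hG a
  have := hG b
  rw [card_univ] at *
  omega

theorem exists_eq_append_cons_cons_adj_adj (hG : ∀ v, #(G.neighborFinset v)ᶜ ≤ k)
    (hl : l.Nodup) {v : V} (hv : v ∉ l) (hlen : 2 * k ≤ l.length) :
    ∃ l₁ a b l₂, l = l₁ ++ a :: b :: l₂ ∧ G.Adj a v ∧ G.Adj v b := by
  have hcount : l.countP (fun x => !G.Adj v x) + 1 ≤ k := by
    have hsub : (l.filter (fun x => !G.Adj v x)).toFinset ⊆ (G.neighborFinset v)ᶜ.erase v := by
      intro x hx
      simp only [List.mem_toFinset, List.mem_filter, Bool.not_eq_true',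
        decide_eq_false_iff_not] at hx
      simp only [mem_erase, mem_compl, mem_neighborFinset]
      exact ⟨fun h => hv (h ▸ hx.1), hx.2⟩
    rw [List.countP_eq_length_filter, ← List.toFinset_card_of_nodup (hl.filter _)]
    have := card_erase_add_one (s := (G.neighborFinset v)ᶜ) (a := v) (by simp)
    have := card_le_card hsub
    have := hG v
    omega
  have hnot : ¬ l.IsChain (fun a b => !G.Adj v a ∨ !G.Adj v b) := fun h => by
    have := List.length_le_two_mul_countP_add_one _ h
    omega
  rw [List.isChain_iff_forall_rel_of_append_cons_cons] at hnot
  push Not at hnot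
  obtain ⟨a, b, l₁, l₂, rfl, hab⟩ := hnot
  simp only [ne_eq, Bool.not_eq_eq_eq_not, Bool.not_true, decide_eq_false_iff_not,
    Decidable.not_not] at hab
  exact ⟨l₁, a, b, l₂, rfl, hab.1.symm, hab.2⟩

theorem IsPathSupport.exists_length_eq_succ (hG : ∀ v, #(G.neighborFinset v)ᶜ ≤ k)
    (hn : 4 * k ≤ Fintype.card V + 2) (hst : s ≠ t) (h : G.IsPathSupport s t l)
    (hl : l.length < Fintype.card V) :
    ∃ l', G.IsPathSupport s t l' ∧ l'.length = l.length + 1 := by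
  by_cases hlong : 2 * k ≤ l.length
  · obtain ⟨v, hv⟩ : ∃ v, v ∉ l := by
      by_contra! hall
      have : Fintype.card V ≤ l.length := by
        rw [← List.toFinset_card_of_nodup h.nodup, ← card_univ]
        exact card_le_card fun v _ => List.mem_toFinset.2 (hall v)
      omega
    obtain ⟨l₁, a, b, l₂, rfl, ha, hb⟩ := exists_eq_append_cons_cons_adj_adj hG h.nodup hv hlong
    refine ⟨_, h.insert_between hv ha hb, ?_⟩
    simp only [List.length_append, List.length_cons]
    omega
  · obtain ⟨a, b, l₂, rfl⟩ : ∃ a b l₂, l = a :: b :: l₂ := by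
      match l, h with
      | [], h => simpa using h.head?_eq
      | [_], h => exact absurd ((Option.some_inj.1 h.head?_eq).symm.trans
          (Option.some_inj.1 h.getLast?_eq)) hst
      | a :: b :: l₂, _ => exact ⟨a, b, l₂, rfl⟩
    have hcard := List.toFinset_card_le (a :: b :: l₂)
    obtain ⟨w, hw, haw, hbw⟩ := exists_adj_adj_notMem hG (S := (a :: b :: l₂).toFinset)
      (a := a) (b := b) (by simp) (by simp) (by omega)
    exact ⟨_, h.insert_between (l₁ := []) (by simpa using hw) haw hbw.symm, by simp⟩

theorem exists_isPathSupport_card_le_length (hG : ∀ v, #(G.neighborFinset v)ᶜ ≤ k)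
    (hn : 5 * k ≤ Fintype.card V + 2) (hst : s ≠ t) :
    ∃ l, G.IsPathSupport s t l ∧ Fintype.card V ≤ l.length := by
  suffices ∀ m ≤ Fintype.card V, ∃ l, G.IsPathSupport s t l ∧ m ≤ l.length from this _ le_rfl
  intro m hm
  induction m with
  | zero =>
    have hpair := card_le_univ ({s, t} : Finset V)
    rw [card_pair hst] at hpair
    obtain ⟨w, hw, hsw, htw⟩ := exists_adj_adj_notMem hG (S := {s, t}) (a := s) (b := t)
      (by simp) (by simp) (by rw [card_pair hst]; omega)
    simp only [mem_insert, mem_singleton, not_or] at hw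
    refine ⟨[s, w, t], ⟨?_, ?_, rfl, rfl⟩, Nat.zero_le _⟩
    · simp [hst, Ne.symm hw.1, hw.2]
    · simp [hsw, htw.symm]
  | succ m ih =>
    obtain ⟨l, hl, hml⟩ := ih (by omega)
    rcases hml.lt_or_eq with hlt | rfl
    · exact ⟨l, hl, hlt⟩
    · obtain ⟨l', hl', hlen⟩ := hl.exists_length_eq_succ hG (by omega) hst (by omega)
      exact ⟨l', hl', hlen.ge⟩

theorem exists_isHamiltonian (hG : ∀ v, #(G.neighborFinset v)ᶜ ≤ k)
    (hn : 5 * k ≤ Fintype.card V + 2) (hst : s ≠ t) : ∃ p : G.Walk s t, p.IsHamiltonian := by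
  obtain ⟨l, hl, hlen⟩ := exists_isPathSupport_card_le_length hG hn hst
  obtain ⟨p, hp, rfl⟩ := hl.exists_isPath
  have := hl.nodup.length_le_card
  rw [Walk.length_support] at hlen this
  exact ⟨p, Walk.isHamiltonian_iff_isPath_and_length_eq.2 ⟨hp, by omega⟩⟩

end SimpleGraph

theorem hamiltonian_path_of_minDegree_general {V : Type*} [Fintype V] (G : SimpleGraph V)
    [DecidableRel G.Adj] (k : ℕ)
    (hδ : max (5 * k - 3) (Fintype.card V - k) ≤ G.minDegree) :
    ∀ s t : V, s ≠ t → ∃ p : G.Walk s t, p.IsPath ∧ ∀ v : V, v ∈ p.support := by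
  classical
  intro s t hst
  have hdeg v : max (5 * k - 3) (Fintype.card V - k) ≤ G.degree v :=
    hδ.trans (G.minDegree_le_degree v)
  have hG v : #(G.neighborFinset v)ᶜ ≤ k := by
    rw [card_compl, G.card_neighborFinset_eq_degree]
    have := hdeg v
    omega
  have hn : 5 * k ≤ Fintype.card V + 2 := by
    have := hdeg s
    have := G.degree_lt_card_verts s
    omega
  obtain ⟨p, hp⟩ := SimpleGraph.exists_isHamiltonian hG hn hst
  exact ⟨p, hp.isPath, hp.mem_support⟩

/-- Let `G` be an `n`-vertex graph and `k ≥ 1` with `δ(G) ≥ max {5k - 3, n - k}`.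
Then for every two distinct vertices `s` and `t` there is a Hamiltonian
`(s,t)`-path in `G`. -/
theorem hamiltonian_path_of_minDegree {V : Type*} [Fintype V] (G : SimpleGraph V)
    [DecidableRel G.Adj] (k : ℕ) (hk : 1 ≤ k)
    (hδ : max (5 * k - 3) (Fintype.card V - k) ≤ G.minDegree) :
    ∀ s t : V, s ≠ t → ∃ p : G.Walk s t, p.IsPath ∧ ∀ v : V, v ∈ p.support :=
  hamiltonian_path_of_minDegree_general G k hδ
end

section
/- Let k be a positive integer, let G be a graph and let H be an induced subgraph of G with δ(H) ≥ max{5k−3, |V(H)|−k}. Suppose there are distinct vertices s,t ∈ V(H) and an (s,t)-path P in G all of whose internal vertices lie outside V(H), with at least p internal vertices. Then G contains a cycle with at least |V(H)|+p vertices. -/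
open SimpleGraph

/-- A (simple) path in `G`, packaged with its two end-vertices. -/
structure PathIn {V : Type*} (G : SimpleGraph V) where
  first : V
  last : V
  walk : G.Walk first last
  isPath : walk.IsPath

namespace PathIn

variable {V : Type*} {G : SimpleGraph V}

/-- The vertex set of the path. -/
def verts (P : PathIn G) : Set V := {x | x ∈ P.walk.support}

/-- The internal (non-end) vertices of the path. -/
def internals (P : PathIn G) : Set V := {x | x ∈ P.walk.support.tail.dropLast}

/-- `x` is an end-vertex of the path. -/
def IsEndpoint (P : PathIn G) (x : V) : Prop := x = P.first ∨ x = P.last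

end PathIn

/-- A path `P` is a one-terminal `T`-segment if it has at least 2 vertices, exactly
one of its end-vertices is in `T`, and all its other vertices are outside `T`. -/
def IsOneTerminalSegment {V : Type*} (G : SimpleGraph V) (T : Set V) (P : PathIn G) : Prop :=
  2 ≤ P.walk.support.length ∧
    ((P.first ∈ T ∧ ∀ x ∈ P.walk.support.tail, x ∉ T) ∨
     (P.last ∈ T ∧ ∀ x ∈ P.walk.support.dropLast, x ∉ T))

/-- A path `P` is a two-terminal `T`-segment if it has at least 3 vertices, both of
its end-vertices are in `T`, and all its internal vertices are outside `T`. -/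
def IsTwoTerminalSegment {V : Type*} (G : SimpleGraph V) (T : Set V) (P : PathIn G) : Prop :=
  3 ≤ P.walk.support.length ∧ P.first ∈ T ∧ P.last ∈ T ∧ ∀ x ∈ P.internals, x ∉ T

/-- The union of a family of paths, as a simple graph on the vertices of `G`. -/
def segUnionGraph {V : Type*} {G : SimpleGraph V} {r : ℕ} (P : Fin r → PathIn G) :
    SimpleGraph V :=
  (⨆ i, (P i).walk.toSubgraph).spanningCoe

/-- A linear forest: a graph each of whose connected components is a path,
equivalently (for finite graphs) an acyclic graph of maximum degree at most 2. -/
def IsLinearForest {V : Type*} (F : SimpleGraph V) : Prop :=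
  F.IsAcyclic ∧ ∀ v : V, (F.neighborSet v).ncard ≤ 2

/-- The paths `P i` are pairwise internally vertex-disjoint: a common vertex of two
of the paths must be an end-vertex of both. -/
def InternallyDisjoint {V : Type*} {G : SimpleGraph V} {r : ℕ} (P : Fin r → PathIn G) : Prop :=
  ∀ i j : Fin r, i ≠ j → ∀ x : V, x ∈ (P i).verts → x ∈ (P j).verts →
    (P i).IsEndpoint x ∧ (P j).IsEndpoint x

/-- A system of `T`-segments: a family of two-terminal `T`-segments that are pairwise
internally vertex-disjoint and whose union is a linear forest. -/
def IsSegmentSystem {V : Type*} (G : SimpleGraph V) (T : Set V) {r : ℕ}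
    (P : Fin r → PathIn G) : Prop :=
  (∀ i, IsTwoTerminalSegment G T (P i)) ∧
  InternallyDisjoint P ∧
  IsLinearForest (segUnionGraph P)

/-- An extended system of `T`-segments: (i) at least one and at most two of the paths
are one-terminal `T`-segments and the remaining ones are two-terminal `T`-segments;
(ii) the paths are pairwise internally vertex-disjoint and the end-vertex outside `T`
of each one-terminal segment is distinct from all other vertices of the paths;
(iii) the union of the paths is a linear forest, and if there are two one-terminal
segments then their vertices lie in distinct components of this forest. -/
def IsExtendedSegmentSystem {V : Type*} (G : SimpleGraph V) (T : Set V) {r : ℕ}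
    (P : Fin r → PathIn G) : Prop :=
  (∃ i, IsOneTerminalSegment G T (P i)) ∧
  (∀ i j l : Fin r, IsOneTerminalSegment G T (P i) → IsOneTerminalSegment G T (P j) →
      IsOneTerminalSegment G T (P l) → i = j ∨ i = l ∨ j = l) ∧
  (∀ i, IsOneTerminalSegment G T (P i) ∨ IsTwoTerminalSegment G T (P i)) ∧
  InternallyDisjoint P ∧
  (∀ i, IsOneTerminalSegment G T (P i) → ∀ x : V, (P i).IsEndpoint x → x ∉ T →
      ∀ j, j ≠ i → x ∉ (P j).verts) ∧
  IsLinearForest (segUnionGraph P) ∧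
  (∀ i j : Fin r, i ≠ j → IsOneTerminalSegment G T (P i) → IsOneTerminalSegment G T (P j) →
      ∀ x ∈ (P i).verts, ∀ y ∈ (P j).verts, ¬ (segUnionGraph P).Reachable x y)

/-- The total number of vertices of the paths of the family lying outside `T`. -/
noncomputable def outsideCount {V : Type*} {G : SimpleGraph V} {r : ℕ} (T : Set V)
    (P : Fin r → PathIn G) : ℕ :=
  ((⋃ i, (P i).verts) \ T).ncard

/-- `H` is a `d`-core of `G`: an inclusion-maximal vertex set inducing a connected
subgraph of minimum degree at least `d`. -/
def IsDCore {V : Type*} (G : SimpleGraph V) (d : ℕ) (H : Set V) : Prop :=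
  (G.induce H).Connected ∧
  (∀ v ∈ H, d ≤ (G.neighborSet v ∩ H).ncard) ∧
  ∀ H' : Set V, H ⊆ H' → (G.induce H').Connected →
    (∀ v ∈ H', d ≤ (G.neighborSet v ∩ H').ncard) → H' = H

/-!
Every vertex of `H` is non-adjacent to fewer than `k` other vertices of `H`, and `|H| ≥ 5k - 2`.
This makes `H` Hamiltonian-connected: an `(s,t)`-path inside `H` can be grown one vertex at a
time. While the path has fewer than `2k` vertices, its first two vertices have a common neighbour
in `H` off the path; once it has at least `2k` vertices, any vertex of `H` off the path is adjacent
to both ends of one of its edges, since each of its fewer than `k` non-neighbours lies on at most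
two edges of the path. A Hamiltonian `(s,t)`-path of `H` together with `P` is a cycle with
`|H| - 1 + (p + 1)` edges.
-/

namespace List
variable {α : Type*}

theorem length_le_two_mul_countP_add_one_of_isChain {p : α → Bool} {l : List α}
    (hl : l.IsChain fun a b => p a ∨ p b) : l.length ≤ 2 * l.countP p + 1 := by
  induction l using twoStepInduction with
  | nil => simp
  | singleton => simp
  | cons_cons a b r ih ih' =>
    rw [isChain_cons_cons] at hl
    rcases hl with ⟨ha | hb, hl⟩
    · have := ih' b hl
      simp only [countP_cons, ha, length_cons] at this ⊢
      grind
    · have := ih hl.tail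
      simp only [countP_cons, hb, length_cons] at this ⊢
      grind

theorem Nodup.countP_le_ncard {p : α → Bool} {l : List α} (hl : l.Nodup) {A : Set α}
    (hA : ∀ x ∈ l, p x → x ∈ A) (hAfin : A.Finite := by toFinite_tac) :
    l.countP p ≤ A.ncard := by
  classical
  rw [countP_eq_length_filter, ← toFinset_card_of_nodup (hl.filter p), ← Set.ncard_coe_finset]
  exact Set.ncard_le_ncard (fun x hx => by simp at hx; exact hA x hx.1 hx.2) hAfin

theorem ncard_setOf_mem_le (l : List α) : {x | x ∈ l}.ncard ≤ l.length := by
  classical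
  rw [show {x | x ∈ l} = (l.toFinset : Set α) by ext; simp, Set.ncard_coe_finset]
  exact l.toFinset_card_le

end List

namespace SimpleGraph
variable {V : Type*} {G : SimpleGraph V} {H : Set V}

theorem Walk.exists_support_eq {s t : V} {l : List V} (hl : l.IsChain G.Adj)
    (hs : l.head? = some s) (ht : l.getLast? = some t) : ∃ w : G.Walk s t, w.support = l := by
  have hne : l ≠ [] := by rintro rfl; simp at hs
  rw [List.head?_eq_some_head hne, Option.some_inj] at hs
  rw [List.getLast?_eq_some_getLast hne, Option.some_inj] at ht
  exact ⟨(Walk.ofSupport l hne hl).copy hs ht, by simp⟩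

theorem Walk.IsPath.exists_isPath_support_perm_cons {s t a b v : V} {w : G.Walk s t}
    (hw : w.IsPath) {l₁ l₂ : List V} (hsupp : w.support = l₁ ++ a :: b :: l₂)
    (hv : v ∉ w.support) (ha : G.Adj a v) (hb : G.Adj v b) :
    ∃ w' : G.Walk s t, w'.IsPath ∧ w'.support.Perm (v :: w.support) := by
  set l := l₁ ++ a :: v :: b :: l₂
  have hperm : l.Perm (v :: w.support) := by
    rw [hsupp]; simpa [l] using List.perm_middle (l₁ := l₁ ++ [a])
  have hchain : l.IsChain G.Adj := by
    have := w.isChain_adj_support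
    rw [hsupp, List.isChain_append_cons_cons] at this
    simp [l, this, ha, hb]
  have hhead : l.head? = some s := by
    have : w.support.head? = some s := by rw [← w.cons_tail_support]; rfl
    rw [hsupp] at this
    cases l₁ <;> simp_all [l]
  have hlast : l.getLast? = some t := by
    have : w.support.getLast? = some t := by
      rw [List.getLast?_eq_getLast_of_ne_nil w.support_ne_nil, w.getLast_support]
    rw [hsupp] at this
    simp_all [l, List.getLast?_cons_cons]
  obtain ⟨w', hw'⟩ := Walk.exists_support_eq hchain hhead hlast
  refine ⟨w', ?_, hw' ▸ hperm⟩
  rw [Walk.isPath_def, hw', hperm.nodup_iff, List.nodup_cons]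
  exact ⟨hv, hw.support_nodup⟩

theorem Walk.IsPath.isCycle_append_reverse {s t : V} {w q : G.Walk s t} (hw : w.IsPath)
    (hq : q.IsPath) (hwH : ∀ x ∈ w.support, x ∈ H)
    (hqH : ∀ x ∈ q.support.tail.dropLast, x ∉ H) (hlen : 1 < w.length) :
    (w.append q.reverse).IsCycle := by
  refine hw.isCycle_append hq.reverse (List.disjoint_left.mpr fun x hxw hxq => ?_) (.inl hlen)
  have hxs : x ≠ s := by
    rintro rfl
    exact (List.nodup_cons.mp (w.cons_tail_support ▸ hw.support_nodup)).1 hxw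
  rw [Walk.support_reverse, List.tail_reverse, List.mem_reverse, ← q.cons_tail_support] at hxq
  by_cases htail : q.support.tail = []
  · simp [htail] at hxq
  · rw [List.dropLast_cons_of_ne_nil htail, List.mem_cons] at hxq
    exact hqH x (hxq.resolve_left hxs) (hwH x (List.mem_of_mem_tail hxw))

variable [Finite V]

theorem ncard_diff_insert_neighborSet_lt {k : ℕ} {v : V} (hv : v ∈ H)
    (hdeg : H.ncard - k ≤ (G.neighborSet v ∩ H).ncard) :
    (H \ insert v (G.neighborSet v)).ncard < k := by
  have hvN : v ∈ H \ G.neighborSet v := ⟨hv, G.notMem_neighborSet_self⟩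
  have hsplit := Set.ncard_inter_add_ncard_sdiff_eq_ncard H (G.neighborSet v)
  have hpos : 0 < (H \ G.neighborSet v).ncard := (Set.ncard_pos).mpr ⟨v, hvN⟩
  rw [← Set.union_singleton, ← Set.sdiff_sdiff, Set.ncard_sdiff_singleton_of_mem hvN]
  rw [Set.inter_comm] at hdeg
  omega

theorem exists_adj_adj_notMem_of_ncard_lt {a b : V} {S : Set V} (haS : a ∈ S) (hbS : b ∈ S)
    (hcard : (H \ insert a (G.neighborSet a)).ncard + (H \ insert b (G.neighborSet b)).ncard
      + S.ncard < H.ncard) :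
    ∃ v ∈ H, v ∉ S ∧ G.Adj a v ∧ G.Adj v b := by
  have hunion : ((H \ insert a (G.neighborSet a)) ∪ (H \ insert b (G.neighborSet b)) ∪ S).ncard
      < H.ncard :=
    (Set.ncard_union_le _ _).trans_lt <|
      (Nat.add_le_add_right (Set.ncard_union_le _ _) _).trans_lt hcard
  obtain ⟨v, hvH, hv⟩ := Set.exists_mem_notMem_of_ncard_lt_ncard hunion
  simp only [Set.mem_union, Set.mem_sdiff, Set.mem_insert_iff, mem_neighborSet, not_or,
    not_and, not_not] at hv
  obtain ⟨⟨hva, hvb⟩, hvS⟩ := hv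
  have hav : v ≠ a := by rintro rfl; exact hvS haS
  have hbv : v ≠ b := by rintro rfl; exact hvS hbS
  exact ⟨v, hvH, hvS, hva hvH hav, (hvb hvH hbv).symm⟩

theorem exists_adj_adj_of_two_mul_ncard_lt {v : V} {l : List V} (hl : l.Nodup)
    (hlH : ∀ x ∈ l, x ∈ H) (hv : v ∉ l)
    (hlen : 2 * (H \ insert v (G.neighborSet v)).ncard + 1 < l.length) :
    ∃ l₁ a b l₂, l = l₁ ++ a :: b :: l₂ ∧ G.Adj a v ∧ G.Adj v b := by
  classical
  by_contra! h
  have hchain : l.IsChain fun a b => decide (¬ G.Adj v a) ∨ decide (¬ G.Adj v b) := by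
    refine List.isChain_iff_forall_rel_of_append_cons_cons.mpr fun a b l₁ l₂ hl' => ?_
    by_cases hab : G.Adj a v
    · simpa using Or.inr (h l₁ a b l₂ hl' hab)
    · simpa using Or.inl fun hva => hab hva.symm
  have hcount := hl.countP_le_ncard (p := fun x => decide (¬ G.Adj v x))
    (A := H \ insert v (G.neighborSet v)) fun x hx hnadj => by
      simp only [decide_eq_true_eq] at hnadj
      exact ⟨hlH x hx, by rintro (rfl | hadj); exacts [hv hx, hnadj hadj]⟩
  have := List.length_le_two_mul_countP_add_one_of_isChain hchain
  omega

theorem exists_isPath_support_length_succ {k : ℕ}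
    (hH : ∀ v ∈ H, (H \ insert v (G.neighborSet v)).ncard < k) (hn : 4 * k ≤ H.ncard + 1)
    {s t : V} (hst : s ≠ t) {w : G.Walk s t} (hw : w.IsPath) (hwH : ∀ x ∈ w.support, x ∈ H)
    (hlt : w.support.length < H.ncard) :
    ∃ w' : G.Walk s t, w'.IsPath ∧ (∀ x ∈ w'.support, x ∈ H) ∧
      w'.support.length = w.support.length + 1 := by
  suffices ∃ v ∉ w.support, v ∈ H ∧
      ∃ l₁ a b l₂, w.support = l₁ ++ a :: b :: l₂ ∧ G.Adj a v ∧ G.Adj v b by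
    obtain ⟨v, hv, hvH, l₁, a, b, l₂, hsupp, ha, hb⟩ := this
    obtain ⟨w', hw', hperm⟩ := hw.exists_isPath_support_perm_cons hsupp hv ha hb
    refine ⟨w', hw', fun x hx => ?_, by simp [hperm.length_eq]⟩
    rcases List.mem_cons.mp (hperm.mem_iff.mp hx) with rfl | hx
    exacts [hvH, hwH x hx]
  have hS := w.support.ncard_setOf_mem_le
  by_cases hlong : 2 * k ≤ w.support.length
  · obtain ⟨v, hvH, hv⟩ := Set.exists_mem_notMem_of_ncard_lt_ncard (hS.trans_lt hlt)
    have := hH v hvH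
    exact ⟨v, hv, hvH, exists_adj_adj_of_two_mul_ncard_lt hw.support_nodup hwH hv (by omega)⟩
  · cases w with
    | nil => exact absurd rfl hst
    | @cons _ u _ hsu w' =>
      have := hH s (hwH s (by simp))
      have := hH u (hwH u (by simp))
      obtain ⟨v, hvH, hv, hsv, hvu⟩ := exists_adj_adj_notMem_of_ncard_lt
        (G := G) (H := H) (a := s) (b := u) (S := {x | x ∈ (Walk.cons hsu w').support})
        (by simp) (by simp) (by omega)
      exact ⟨v, hv, hvH, [], s, u, w'.support.tail, by simp [w'.cons_tail_support], hsv, hvu⟩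

theorem exists_isPath_support_length_eq_ncard {k : ℕ}
    (hH : ∀ v ∈ H, (H \ insert v (G.neighborSet v)).ncard < k) (hn : 4 * k ≤ H.ncard + 1)
    {s t : V} (hs : s ∈ H) (ht : t ∈ H) (hst : s ≠ t) :
    ∃ w : G.Walk s t, w.IsPath ∧ (∀ x ∈ w.support, x ∈ H) ∧
      w.support.length = H.ncard := by
  have := hH s hs
  have := hH t ht
  suffices ∀ L, 3 ≤ L → L ≤ H.ncard →
      ∃ w : G.Walk s t, w.IsPath ∧ (∀ x ∈ w.support, x ∈ H) ∧ w.support.length = L from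
    this _ (by omega) le_rfl
  intro L hL
  induction L, hL using Nat.le_induction with
  | base =>
    intro _
    have hS : ({s, t} : Set V).ncard = 2 := Set.ncard_pair hst
    obtain ⟨v, hvH, hv, hsv, hvt⟩ := exists_adj_adj_notMem_of_ncard_lt
      (G := G) (H := H) (a := s) (b := t) (S := {s, t}) (by simp) (by simp) (by omega)
    simp only [Set.mem_insert_iff, Set.mem_singleton_iff, not_or] at hv
    refine ⟨.cons hsv (.cons hvt .nil), ?_, ?_, by simp⟩
    · simp [Walk.cons_isPath_iff, hst, Ne.symm hv.1, hv.2]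
    · simp only [Walk.support_cons, Walk.support_nil, List.mem_cons, List.not_mem_nil]
      rintro x (rfl | rfl | rfl | h)
      exacts [hs, hvH, ht, h.elim]
  | succ L _ ih =>
    intro hL
    obtain ⟨w, hw, hwH, rfl⟩ := ih (by omega)
    exact exists_isPath_support_length_succ hH hn hst hw hwH hL


end SimpleGraph

theorem cycle_of_long_segment_general {V : Type*} [Fintype V] (G : SimpleGraph V)
    (k p : ℕ) (H : Set V)
    (hδ : ∀ v ∈ H, max (5 * k - 3) (H.ncard - k) ≤ (G.neighborSet v ∩ H).ncard)
    (s t : V) (hs : s ∈ H) (ht : t ∈ H) (hst : s ≠ t)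
    (q : G.Walk s t) (hq : q.IsPath)
    (hint : ∀ x ∈ q.support.tail.dropLast, x ∉ H)
    (hp : p ≤ q.support.tail.dropLast.length) :
    ∃ (v : V) (c : G.Walk v v), c.IsCycle ∧ H.ncard + p ≤ c.length := by
  have hnonadj v (hv : v ∈ H) : (H \ insert v (G.neighborSet v)).ncard < k :=
    ncard_diff_insert_neighborSet_lt hv ((le_max_right _ _).trans (hδ v hv))
  have hn : 4 * k ≤ H.ncard + 1 := by
    have hdeg := (le_max_left _ _).trans (hδ s hs)
    have : (G.neighborSet s ∩ H).ncard < H.ncard :=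
      Set.ncard_lt_ncard ⟨Set.inter_subset_right, fun h => G.notMem_neighborSet_self (h hs).1⟩
    omega
  have hk : 0 < k := (hnonadj s hs).trans_le' (Nat.zero_le _)
  obtain ⟨w, hw, hwH, hwlen⟩ := exists_isPath_support_length_eq_ncard hnonadj hn hs ht hst
  refine ⟨s, w.append q.reverse, hw.isCycle_append_reverse hq hwH hint ?_, ?_⟩
  · rw [Walk.length_support] at hwlen
    omega
  · simp only [Walk.length_append, Walk.length_reverse]
    simp only [List.length_dropLast, List.length_tail, Walk.length_support] at hp hwlen
    have : q.length ≠ 0 := mt Walk.eq_of_length_eq_zero hst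
    omega

/-- Let `k ≥ 1` and let `H` be (the vertex set of) an induced subgraph of `G` with
`δ(H) ≥ max {5k - 3, |V(H)| - k}`. If there are distinct `s, t ∈ V(H)` and an
`(s,t)`-path in `G` whose internal vertices all lie outside `V(H)`, with at least `p`
internal vertices, then `G` contains a cycle with at least `|V(H)| + p` vertices. -/
theorem cycle_of_long_segment {V : Type*} [Fintype V] (G : SimpleGraph V)
    (k p : ℕ) (hk : 1 ≤ k) (H : Set V)
    (hδ : ∀ v ∈ H, max (5 * k - 3) (H.ncard - k) ≤ (G.neighborSet v ∩ H).ncard)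
    (s t : V) (hs : s ∈ H) (ht : t ∈ H) (hst : s ≠ t)
    (q : G.Walk s t) (hq : q.IsPath)
    (hint : ∀ x ∈ q.support.tail.dropLast, x ∉ H)
    (hp : p ≤ q.support.tail.dropLast.length) :
    ∃ (v : V) (c : G.Walk v v), c.IsCycle ∧ H.ncard + p ≤ c.length :=
  cycle_of_long_segment_general G k p H hδ s t hs ht hst q hq hint hp
end

section
/- Let G be a graph on n ≥ 2 vertices that is not complete, and let G' be the disjoint union of G and the complete graph K_{n−1} on n−1 vertices. Then the degeneracy of G' equals n−2, and G' contains a path with at least n vertices if and only if G has a Hamiltonian path. -/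
open SimpleGraph Set

private lemma sum_walk_inl {α β : Type*} {G : SimpleGraph α} {H : SimpleGraph β} :
    ∀ {u w : α ⊕ β} (q : (G ⊕g H).Walk u w) (a : α), u = Sum.inl a →
      ∃ (b : α) (r : G.Walk a b), w = Sum.inl b ∧ q.support = r.support.map Sum.inl := by
  intro u w q
  induction q with
  | nil => rintro a rfl; exact ⟨a, .nil, rfl, by simp⟩
  | @cons u x w h q ih =>
    rintro a rfl
    cases x with
    | inr x => simp [SimpleGraph.sum_adj] at h
    | inl a' =>
      obtain ⟨b, r, rfl, hs⟩ := ih a' rfl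
      exact ⟨b, .cons (by simpa using h) r, rfl, by simp [hs]⟩

private lemma sum_walk_inr {α β : Type*} {G : SimpleGraph α} {H : SimpleGraph β} :
    ∀ {u w : α ⊕ β} (q : (G ⊕g H).Walk u w) (a : β), u = Sum.inr a →
      ∃ (b : β) (r : H.Walk a b), w = Sum.inr b ∧ q.support = r.support.map Sum.inr := by
  intro u w q
  induction q with
  | nil => rintro a rfl; exact ⟨a, .nil, rfl, by simp⟩
  | @cons u x w h q ih =>
    rintro a rfl
    cases x with
    | inl x => simp [SimpleGraph.sum_adj] at h
    | inr a' =>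
      obtain ⟨b, r, rfl, hs⟩ := ih a' rfl
      exact ⟨b, .cons (by simpa using h) r, rfl, by simp [hs]⟩

private lemma ncard_compl_singleton' {γ : Type*} [Fintype γ] (x : γ) :
    ({x}ᶜ : Set γ).ncard = Fintype.card γ - 1 := by
  rw [compl_eq_univ_diff, Set.ncard_diff (Set.subset_univ _), Set.ncard_univ,
    Set.ncard_singleton, Nat.card_eq_fintype_card]

/-- The degeneracy of a finite simple graph: the maximum, over all nonempty
(induced) subgraphs given by a vertex set `s`, of the minimum degree inside `s`. -/
noncomputable def SimpleGraph.degeneracy {V : Type*} [Fintype V] (G : SimpleGraph V) : ℕ :=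
  sSup {d : ℕ | ∃ s : Set V, s.Nonempty ∧ ∀ v ∈ s, d ≤ (G.neighborSet v ∩ s).ncard}

/-- Let `G` be a non-complete graph on `n ≥ 2` vertices and let `G'` be the disjoint
union of `G` and the complete graph on `n - 1` vertices. Then `dg(G') = n - 2`, and
`G'` has a path with at least `n` vertices iff `G` has a Hamiltonian path. -/
theorem degeneracy_path_reduction {V : Type*} [Fintype V] (G : SimpleGraph V)
    (hn : 2 ≤ Fintype.card V) (hnc : G ≠ ⊤) :
    (G ⊕g (⊤ : SimpleGraph (Fin (Fintype.card V - 1)))).degeneracy = Fintype.card V - 2 ∧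
    ((∃ (u v : V ⊕ Fin (Fintype.card V - 1))
        (p : (G ⊕g (⊤ : SimpleGraph (Fin (Fintype.card V - 1)))).Walk u v),
        p.IsPath ∧ Fintype.card V ≤ p.support.length) ↔
     (∃ (u v : V) (p : G.Walk u v), p.IsPath ∧ ∀ x : V, x ∈ p.support)) := by
  classical
  set n := Fintype.card V with hn'
  set G' := G ⊕g (⊤ : SimpleGraph (Fin (n - 1))) with hG'
  -- neighborhood computations
  have hNr : ∀ x : Fin (n - 1), G'.neighborSet (Sum.inr x) = Sum.inr '' ({x}ᶜ) := by
    intro x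
    ext w
    cases w with
    | inl a => simp [SimpleGraph.neighborSet, hG', SimpleGraph.sum_adj]
    | inr y =>
      simp only [SimpleGraph.mem_neighborSet, hG', SimpleGraph.sum_adj, top_adj,
        Set.mem_image, Set.mem_compl_iff, Set.mem_singleton_iff]
      constructor
      · intro h; exact ⟨y, fun hy => h (hy ▸ rfl), rfl⟩
      · rintro ⟨z, hz, hzz⟩ heq
        cases hzz
        exact hz heq.symm
  have hNrcard : ∀ x : Fin (n - 1), (Sum.inr '' ({x}ᶜ) :
      Set (V ⊕ Fin (n - 1))).ncard = n - 2 := by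
    intro x
    rw [Set.ncard_image_of_injective _ Sum.inr_injective, ncard_compl_singleton',
      Fintype.card_fin]
    omega
  have hNl : ∀ a : V, G'.neighborSet (Sum.inl a) ⊆ Sum.inl '' ({a}ᶜ) := by
    intro a w hw
    cases w with
    | inl b =>
      exact ⟨b, fun hb => (by simpa [hG', SimpleGraph.sum_adj] using hw :
        G.Adj a b).ne' (by rw [hb]), rfl⟩
    | inr y => simp [hG', SimpleGraph.neighborSet, SimpleGraph.sum_adj] at hw
  have hNlcard : ∀ a : V, (Sum.inl '' ({a}ᶜ) : Set (V ⊕ Fin (n - 1))).ncard = n - 1 := by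
    intro a
    rw [Set.ncard_image_of_injective _ Sum.inl_injective, ncard_compl_singleton']
  -- the defining set of the degeneracy
  set D := {d : ℕ | ∃ s : Set (V ⊕ Fin (n - 1)), s.Nonempty ∧
    ∀ v ∈ s, d ≤ (G'.neighborSet v ∩ s).ncard} with hD
  have hmem : n - 2 ∈ D := by
    refine ⟨Set.range Sum.inr, ⟨Sum.inr ⟨0, by omega⟩, Set.mem_range_self _⟩, ?_⟩
    rintro v ⟨x, rfl⟩
    have hsub : G'.neighborSet (Sum.inr x) ⊆ Set.range Sum.inr := by
      rw [hNr]; rintro w ⟨z, _, rfl⟩; exact ⟨z, rfl⟩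
    rw [Set.inter_eq_left.mpr hsub, hNr, hNrcard]
  have hbdd : BddAbove D := by
    refine ⟨Fintype.card (V ⊕ Fin (n - 1)), ?_⟩
    rintro d ⟨s, ⟨v, hv⟩, hmin⟩
    calc d ≤ (G'.neighborSet v ∩ s).ncard := hmin v hv
      _ ≤ (Set.univ : Set (V ⊕ Fin (n - 1))).ncard :=
        Set.ncard_le_ncard (Set.subset_univ _) (Set.toFinite _)
      _ = Fintype.card (V ⊕ Fin (n - 1)) := by
        rw [Set.ncard_univ, Nat.card_eq_fintype_card]
  have hdeg : G'.degeneracy = n - 2 := by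
    refine le_antisymm (csSup_le ⟨_, hmem⟩ ?_) (le_csSup hbdd hmem)
    rintro d ⟨s, ⟨v0, hv0⟩, hmin⟩
    by_contra hlt
    push_neg at hlt
    have hd : n - 1 ≤ d := by omega
    -- no inr-vertex is in s
    have hnoinr : ∀ x : Fin (n - 1), Sum.inr x ∉ s := by
      intro x hx
      have h1 := hmin _ hx
      have h2 : (G'.neighborSet (Sum.inr x) ∩ s).ncard ≤ n - 2 := by
        calc (G'.neighborSet (Sum.inr x) ∩ s).ncard
            ≤ (Sum.inr '' ({x}ᶜ) : Set (V ⊕ Fin (n - 1))).ncard := by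
              refine Set.ncard_le_ncard ?_ (Set.toFinite _)
              rw [← hNr]; exact Set.inter_subset_left
          _ = n - 2 := hNrcard x
      omega
    -- for each inl-vertex of s, its neighbourhood in s is everything else
    have hkey : ∀ a : V, Sum.inl a ∈ s →
        G'.neighborSet (Sum.inl a) ∩ s = Sum.inl '' ({a}ᶜ) := by
      intro a ha
      refine Set.eq_of_subset_of_ncard_le
        (Set.inter_subset_left.trans (hNl a)) ?_ (Set.toFinite _)
      calc (Sum.inl '' ({a}ᶜ) : Set (V ⊕ Fin (n - 1))).ncard = n - 1 := hNlcard a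
        _ ≤ d := hd
        _ ≤ _ := hmin _ ha
    obtain ⟨a0, ha0⟩ : ∃ a0 : V, Sum.inl a0 ∈ s := by
      cases v0 with
      | inl a => exact ⟨a, hv0⟩
      | inr x => exact absurd hv0 (hnoinr x)
    have hall : ∀ a : V, Sum.inl a ∈ s := by
      intro a
      by_cases h : a = a0
      · exact h ▸ ha0
      · have : Sum.inl a ∈ G'.neighborSet (Sum.inl a0) ∩ s := by
          rw [hkey a0 ha0]; exact ⟨a, h, rfl⟩
        exact this.2
    apply hnc
    ext a b
    simp only [top_adj]
    constructor
    · exact fun h => h.ne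
    · intro hab
      have : Sum.inl b ∈ G'.neighborSet (Sum.inl a) ∩ s := by
        rw [hkey a (hall a)]
        exact ⟨b, fun hb => hab (by rw [hb]), rfl⟩
      have := this.1
      simpa [hG', SimpleGraph.sum_adj] using this
  refine ⟨hdeg, ?_, ?_⟩
  · rintro ⟨u, v, p, hp, hlen⟩
    cases u with
    | inr x =>
      obtain ⟨b, r, rfl, hs⟩ := sum_walk_inr p x rfl
      have hnodup : r.support.Nodup := by
        have := (Walk.isPath_def _).mp hp
        rw [hs] at this
        exact this.of_map
      have hle := hnodup.length_le_card
      rw [Fintype.card_fin] at hle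
      rw [hs, List.length_map] at hlen
      omega
    | inl a =>
      obtain ⟨b, r, rfl, hs⟩ := sum_walk_inl p a rfl
      have hnodup : r.support.Nodup := by
        have := (Walk.isPath_def _).mp hp
        rw [hs] at this
        exact this.of_map
      rw [hs, List.length_map] at hlen
      have hcard : r.support.toFinset.card = r.support.length :=
        List.toFinset_card_of_nodup hnodup
      have huniv : r.support.toFinset = Finset.univ := by
        apply Finset.eq_univ_of_card
        have hle := hnodup.length_le_card
        omega
      refine ⟨a, b, r, (Walk.isPath_def _).mpr hnodup, fun x => ?_⟩
      rw [← List.mem_toFinset, huniv]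
      exact Finset.mem_univ x
  · rintro ⟨u, v, p, hp, hall⟩
    refine ⟨Sum.inl u, Sum.inl v, p.map Embedding.sumInl.toHom,
      p.map_isPath_of_injective (fun x y hxy => by simpa using hxy) hp, ?_⟩
    erw [Walk.support_map, List.length_map]
    have huniv : p.support.toFinset = Finset.univ :=
      Finset.eq_univ_iff_forall.mpr fun x => List.mem_toFinset.mpr (hall x)
    calc n = p.support.toFinset.card := by rw [huniv, Finset.card_univ]
      _ ≤ p.support.length := p.support.toFinset_card_le
end

section
/- Let G be a connected graph on n ≥ 3 vertices that is not complete, and let G' be obtained from the disjoint union of G and the complete graph K_{n−1} on n−1 vertices by identifying one vertex of G with one vertex of K_{n−1}. Then G' is connected, has |V(G)|+n−2 vertices, the degeneracy of G' equals n−2, and G' contains a cycle with at least n vertices if and only if G has a Hamiltonian cycle. -/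
/-- The graph obtained from `G` together with a complete graph on `{x0} ⊕ Fin m`
(i.e. the disjoint union of `G` and `K_{m+1}` where the vertex `x0` of `G` is
identified with one vertex of the complete graph). -/
def identifyWithClique {V : Type*} (G : SimpleGraph V) (x0 : V) (m : ℕ) :
    SimpleGraph (V ⊕ Fin m) :=
  SimpleGraph.fromRel (fun x y =>
    match x, y with
    | Sum.inl a, Sum.inl b => G.Adj a b
    | Sum.inl a, Sum.inr _ => a = x0
    | Sum.inr _, Sum.inr _ => True
    | _, _ => False)


open SimpleGraph Sum

section Helpers

variable {V : Type*} (G : SimpleGraph V) (x0 : V) (m : ℕ)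

lemma iwc_adj_inl_inl {a b : V} :
    (identifyWithClique G x0 m).Adj (inl a) (inl b) ↔ G.Adj a b := by
  constructor
  · rintro ⟨-, h | h⟩
    · exact h
    · exact h.symm
  · exact fun h => ⟨by simpa using h.ne, Or.inl h⟩

lemma iwc_adj_inl_inr {a : V} {i : Fin m} :
    (identifyWithClique G x0 m).Adj (inl a) (inr i) ↔ a = x0 := by
  constructor
  · rintro ⟨-, h | h⟩
    · exact h
    · exact h.elim
  · exact fun h => ⟨by simp, Or.inl h⟩

lemma iwc_adj_inr_inl {a : V} {i : Fin m} :
    (identifyWithClique G x0 m).Adj (inr i) (inl a) ↔ a = x0 := by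
  rw [adj_comm]; exact iwc_adj_inl_inr G x0 m

lemma iwc_adj_inr_inr {i j : Fin m} :
    (identifyWithClique G x0 m).Adj (inr i) (inr j) ↔ i ≠ j := by
  constructor
  · rintro ⟨h, -⟩; simpa using h
  · exact fun h => ⟨by simpa using h, Or.inl trivial⟩

def iwcHom : G →g identifyWithClique G x0 m :=
  ⟨inl, fun h => (iwc_adj_inl_inl G x0 m).mpr h⟩

lemma iwc_cross : ∀ {u v : V ⊕ Fin m}
    (w : (identifyWithClique G x0 m).Walk u v),
    (∃ i, u = inr i) → (∃ b, v = inl b ∧ b ≠ x0) → inl x0 ∈ w.support := by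
  intro u v w
  induction w with
  | nil => rintro ⟨i, rfl⟩ ⟨b, hb, -⟩; exact absurd hb (by simp)
  | @cons u y v h p ih =>
    rintro ⟨i, rfl⟩ hb
    cases y with
    | inl a =>
      obtain rfl : a = x0 := (iwc_adj_inr_inl G x0 m).mp h
      exact List.mem_cons.2 (Or.inr p.start_mem_support)
    | inr j => exact List.mem_cons.2 (Or.inr (ih ⟨j, rfl⟩ hb))

lemma iwc_pull : ∀ {u v : V ⊕ Fin m} (w : (identifyWithClique G x0 m).Walk u v)
    {x y : V} (hx : u = inl x) (hy : v = inl y),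
    (∀ z ∈ w.support, ∃ a, z = inl a) →
    ∃ p : G.Walk x y, p.map (iwcHom G x0 m) = w.copy hx hy := by
  intro u v w
  induction w with
  | nil =>
    rintro x y rfl hy _
    obtain rfl : x = y := by simpa using hy
    exact ⟨Walk.nil, by simp; rfl⟩
  | @cons u y' v h p ih =>
    rintro x z rfl hy hall
    obtain ⟨a, rfl⟩ := hall y' (by simp)
    have ha : G.Adj x a := (iwc_adj_inl_inl G x0 m).mp h
    obtain ⟨p', hp'⟩ := ih rfl hy (fun z hz => hall z (by simp [hz]))
    refine ⟨Walk.cons ha p', ?_⟩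
    rw [Walk.map_cons, Walk.copy_cons, hp']
    rfl

end Helpers

lemma closed_support_tail {W : Type*} {G : SimpleGraph W} {v : W} (c : G.Walk v v)
    (h : c ≠ SimpleGraph.Walk.nil) {x : W} (hx : x ∈ c.support) : x ∈ c.support.tail := by
  cases c with
  | nil => exact absurd rfl h
  | cons hadj p =>
    rw [Walk.support_cons] at hx
    rcases List.mem_cons.mp hx with rfl | hx
    · exact p.end_mem_support
    · exact hx

theorem degeneracy_cycle_reduction' {V : Type*} [Fintype V] (G : SimpleGraph V)
    (hn : 3 ≤ Fintype.card V) (hconn : G.Connected) (hnc : G ≠ ⊤) (x0 : V) :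
    (identifyWithClique G x0 (Fintype.card V - 2)).Connected ∧
    Fintype.card (V ⊕ Fin (Fintype.card V - 2)) = Fintype.card V + Fintype.card V - 2 ∧
    (identifyWithClique G x0 (Fintype.card V - 2)).degeneracy = Fintype.card V - 2 ∧
    ((∃ (v : V ⊕ Fin (Fintype.card V - 2))
        (c : (identifyWithClique G x0 (Fintype.card V - 2)).Walk v v),
        c.IsCycle ∧ Fintype.card V ≤ c.length) ↔
     (∃ (v : V) (c : G.Walk v v), c.IsCycle ∧ ∀ x : V, x ∈ c.support)) := by
  classical
  set n := Fintype.card V with hn_def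
  set m := n - 2 with hm_def
  have hm1 : 1 ≤ m := by omega
  have hinj : Function.Injective (⇑(iwcHom G x0 m)) := fun a b h => Sum.inl_injective h
  refine ⟨?_, ?_, ?_, ?_⟩
  · -- connected
    rw [connected_iff]
    have key : ∀ u, (identifyWithClique G x0 m).Reachable u (inl x0) := by
      rintro (a | i)
      · exact (hconn.preconnected a x0).map (iwcHom G x0 m)
      · exact SimpleGraph.Adj.reachable ((iwc_adj_inr_inl G x0 m).mpr rfl)
    exact ⟨fun u v => (key u).trans (key v).symm,
      ⟨inl x0⟩⟩
  · -- cardinality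
    simp only [Fintype.card_sum, Fintype.card_fin]
    omega
  · -- degeneracy
    have hmem : m ∈ {d : ℕ | ∃ s : Set (V ⊕ Fin m), s.Nonempty ∧
        ∀ v ∈ s, d ≤ ((identifyWithClique G x0 m).neighborSet v ∩ s).ncard} := by
      refine ⟨insert (inl x0) (Set.range (inr : Fin m → V ⊕ Fin m)), ⟨_, Set.mem_insert _ _⟩, ?_⟩
      intro v hv
      set s : Set (V ⊕ Fin m) := insert (inl x0) (Set.range (inr : Fin m → V ⊕ Fin m)) with hs_def
      have hsub : s \ {v} ⊆ (identifyWithClique G x0 m).neighborSet v ∩ s := by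
        rintro w ⟨hws, hwv⟩
        refine ⟨?_, hws⟩
        have hwv' : w ≠ v := hwv
        rcases hv with hv | ⟨i, rfl⟩
        · rcases hws with hw | ⟨j, rfl⟩
          · exact absurd (hw.trans hv.symm) hwv'
          · subst hv; exact (iwc_adj_inl_inr G x0 m).mpr rfl
        · rcases hws with rfl | ⟨j, rfl⟩
          · exact (iwc_adj_inr_inl G x0 m).mpr rfl
          · exact (iwc_adj_inr_inr G x0 m).mpr (by rintro rfl; exact hwv' rfl)
      have hcard : s.ncard = m + 1 := by
        rw [hs_def, Set.ncard_insert_of_notMem (by simp)]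
        rw [← Set.image_univ, Set.ncard_image_of_injective _ Sum.inr_injective,
          Set.ncard_univ, Nat.card_eq_fintype_card, Fintype.card_fin]
      have h1 : (s \ {v}).ncard = m := by
        rw [Set.ncard_diff_singleton_of_mem hv, hcard]
        omega
      calc m = (s \ {v}).ncard := h1.symm
        _ ≤ _ := Set.ncard_le_ncard hsub (Set.toFinite _)
    have hub : ∀ d ∈ {d : ℕ | ∃ s : Set (V ⊕ Fin m), s.Nonempty ∧
        ∀ v ∈ s, d ≤ ((identifyWithClique G x0 m).neighborSet v ∩ s).ncard}, d ≤ m := by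
      rintro d ⟨s, ⟨v0, hv0⟩, hmin⟩
      by_cases hinr : ∃ i, inr i ∈ s
      · obtain ⟨i, hi⟩ := hinr
        refine (hmin _ hi).trans ?_
        have hsub : (identifyWithClique G x0 m).neighborSet (inr i) ∩ s ⊆
            insert (inl x0) (Set.range (inr : Fin m → V ⊕ Fin m) \ {inr i}) := by
          rintro w ⟨hw, -⟩
          cases w with
          | inl a =>
            obtain rfl := (iwc_adj_inr_inl G x0 m).mp hw
            exact Set.mem_insert _ _
          | inr j =>
            refine Set.mem_insert_of_mem _ ⟨⟨j, rfl⟩, ?_⟩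
            have := (iwc_adj_inr_inr G x0 m).mp hw
            simp only [Set.mem_singleton_iff, inr.injEq]
            exact fun h => this (h.symm ▸ rfl)
        have h2 : (Set.range (inr : Fin m → V ⊕ Fin m) \ {inr i}).ncard = m - 1 := by
          rw [Set.ncard_diff_singleton_of_mem (Set.mem_range_self i), ← Set.image_univ,
            Set.ncard_image_of_injective _ Sum.inr_injective, Set.ncard_univ,
            Nat.card_eq_fintype_card, Fintype.card_fin]
        calc ((identifyWithClique G x0 m).neighborSet (inr i) ∩ s).ncard
            ≤ (insert (inl x0) (Set.range (inr : Fin m → V ⊕ Fin m) \ {inr i})).ncard :=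
              Set.ncard_le_ncard hsub (Set.toFinite _)
          _ ≤ (Set.range (inr : Fin m → V ⊕ Fin m) \ {inr i}).ncard + 1 := Set.ncard_insert_le _ _
          _ ≤ m := by rw [h2]; omega
      · push_neg at hinr
        have hsubl : s ⊆ Set.range (inl : V → V ⊕ Fin m) := by
          rintro (a | i) h
          · exact ⟨a, rfl⟩
          · exact absurd h (hinr i)
        set sV : Set V := inl ⁻¹' s with hsV_def
        have hs_eq : s = inl '' sV := by
          apply Set.eq_of_subset_of_subset
          · intro z hz
            obtain ⟨a, rfl⟩ := hsubl hz
            exact ⟨a, hz, rfl⟩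
          · rintro z ⟨a, ha, rfl⟩
            exact ha
        by_cases hu : sV = Set.univ
        · have hex : ∃ a b, a ≠ b ∧ ¬ G.Adj a b := by
            by_contra h
            push_neg at h
            apply hnc
            ext a b
            simp only [top_adj]
            exact ⟨fun hab => hab.ne, fun hab => h a b hab⟩
          obtain ⟨a, b, hab, hnadj⟩ := hex
          have has : inl a ∈ s := by
            rw [hs_eq, hu]
            exact Set.mem_image_of_mem _ (Set.mem_univ a)
          refine (hmin _ has).trans ?_
          have hsub : (identifyWithClique G x0 m).neighborSet (inl a) ∩ s ⊆
              inl '' (Set.univ \ {a, b}) := by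
            rintro w ⟨hw, hws⟩
            obtain ⟨c, rfl⟩ := hsubl hws
            have hac : G.Adj a c := (iwc_adj_inl_inl G x0 m).mp hw
            refine ⟨c, ⟨trivial, ?_⟩, rfl⟩
            simp only [Set.mem_insert_iff, Set.mem_singleton_iff]
            push_neg
            exact ⟨fun h => G.irrefl (h ▸ hac), fun h => hnadj (h ▸ hac)⟩
          have h2 : (inl '' (Set.univ \ {a, b}) : Set (V ⊕ Fin m)).ncard = n - 2 := by
            rw [Set.ncard_image_of_injective _ Sum.inl_injective,
              Set.ncard_diff (by simp), Set.ncard_univ, Nat.card_eq_fintype_card,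
              Set.ncard_pair hab]
          calc _ ≤ (inl '' (Set.univ \ {a, b}) : Set (V ⊕ Fin m)).ncard :=
                Set.ncard_le_ncard hsub (Set.toFinite _)
            _ = m := by rw [h2]
        · have hne : sV ⊂ Set.univ := ⟨Set.subset_univ _, fun h => hu (le_antisymm (Set.subset_univ _) h)⟩
          have hlt : sV.ncard < n := by
            have := Set.ncard_lt_ncard hne (Set.toFinite _)
            rwa [Set.ncard_univ, Nat.card_eq_fintype_card] at this
          have hscard : s.ncard ≤ n - 1 := by
            rw [hs_eq, Set.ncard_image_of_injective _ Sum.inl_injective]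
            omega
          refine (hmin _ hv0).trans ?_
          have hsub : (identifyWithClique G x0 m).neighborSet v0 ∩ s ⊆ s \ {v0} := by
            rintro w ⟨hw, hws⟩
            exact ⟨hws, fun h => (identifyWithClique G x0 m).irrefl (h ▸ hw)⟩
          calc _ ≤ (s \ {v0}).ncard := Set.ncard_le_ncard hsub (Set.toFinite _)
            _ = s.ncard - 1 := Set.ncard_diff_singleton_of_mem hv0
            _ ≤ m := by omega
    exact le_antisymm (csSup_le ⟨m, hmem⟩ hub) (le_csSup ⟨m, hub⟩ hmem)
  · -- cycles
    constructor
    · rintro ⟨v, c, hc, hlen⟩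
      have hnodup : c.support.tail.Nodup := hc.2
      have htl : c.support.tail.length = c.length := by
        have := c.length_support
        have := c.support.length_tail
        omega
      have hPem := Classical.em (∃ i : Fin m, inr i ∈ c.support)
      rcases hPem with hP | hP
      · exfalso
        obtain ⟨i, hi⟩ := hP
        have hQem := Classical.em (∃ b, b ≠ x0 ∧ inl b ∈ c.support)
        rcases hQem with hQ | hQ
        · obtain ⟨b, hbx, hb⟩ := hQ
          have hc' := hc.rotate hi
          have hb' : inl b ∈ (c.rotate _ hi).support := by
            have h1 : inl b ∈ c.support.tail :=
              closed_support_tail c hc.ne_nil hb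
            have h2 := c.support_rotate _ hi
            exact List.mem_of_mem_tail (h2.mem_iff.mpr h1)
          set c' := c.rotate _ hi with hc'_def
          set p := c'.takeUntil (inl b) hb' with hp_def
          set q := c'.dropUntil (inl b) hb' with hq_def
          have hspec : p.append q = c' := c'.take_spec hb'
          have hx0p : inl x0 ∈ p.support :=
            iwc_cross G x0 m p ⟨i, rfl⟩ ⟨b, rfl, hbx⟩
          have hx0q : inl x0 ∈ q.support := by
            have := iwc_cross G x0 m q.reverse ⟨i, rfl⟩ ⟨b, rfl, hbx⟩
            rwa [Walk.support_reverse, List.mem_reverse] at this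
          have hnd : c'.support.tail.Nodup := hc'.2
          have hsupp : c'.support.tail = p.support.tail ++ q.support.tail := by
            rw [← hspec, Walk.support_append]
            rw [p.support_eq_cons]
            rfl
          rw [hsupp, List.nodup_append] at hnd
          have hx0p' : inl x0 ∈ p.support.tail := by
            rcases List.mem_cons.mp (p.support_eq_cons ▸ hx0p) with h | h
            · exact absurd h (by simp)
            · exact h
          have hx0q' : inl x0 ∈ q.support.tail := by
            rcases List.mem_cons.mp (q.support_eq_cons ▸ hx0q) with h | h
            · exact absurd (Sum.inl_injective h).symm hbx
            · exact h
          exact hnd.2.2 _ hx0p' _ hx0q' rfl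
        · push_neg at hQ
          have hsub : ∀ z ∈ c.support.tail, z ∈
              insert (inl x0) ((Finset.univ : Finset (Fin m)).image (inr : Fin m → V ⊕ Fin m)) := by
            intro z hz
            have hz' := List.mem_of_mem_tail hz
            cases z with
            | inl a =>
              rcases eq_or_ne a x0 with rfl | ha
              · exact Finset.mem_insert_self _ _
              · exact absurd hz' (hQ a ha)
            | inr j => exact Finset.mem_insert_of_mem (Finset.mem_image.mpr ⟨j, Finset.mem_univ _, rfl⟩)
          have h1 : c.support.tail.length ≤ m + 1 := by
            have h2 : c.support.tail.toFinset ⊆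
                insert (inl x0) ((Finset.univ : Finset (Fin m)).image (inr : Fin m → V ⊕ Fin m)) :=
              fun z hz => hsub z (List.mem_toFinset.mp hz)
            have h3 := Finset.card_le_card h2
            rw [List.toFinset_card_of_nodup hnodup] at h3
            refine h3.trans ?_
            refine (Finset.card_insert_le _ _).trans ?_
            rw [Finset.card_image_of_injective _ Sum.inr_injective, Finset.card_univ,
              Fintype.card_fin]
          omega
      · push_neg at hP
        have hv : ∃ x, v = inl x := by
          cases v with
          | inl x => exact ⟨x, rfl⟩
          | inr i => exact absurd c.start_mem_support (hP i)
        obtain ⟨x, rfl⟩ := hv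
        obtain ⟨p, hp⟩ := iwc_pull G x0 m c rfl rfl (fun z hz => by
          cases z with
          | inl a => exact ⟨a, rfl⟩
          | inr i => exact absurd hz (hP i))
        rw [Walk.copy_rfl_rfl] at hp
        have hpc : p.IsCycle := (Walk.map_isCycle_iff_of_injective hinj).mp (hp ▸ hc)
        have hplen : n ≤ p.length := by
          have h := congrArg Walk.length hp
          rw [Walk.length_map] at h
          exact le_of_le_of_eq hlen h.symm
        have hpnd : p.support.tail.Nodup := hpc.2
        have hple : p.support.tail.length ≤ n := hpnd.length_le_card
        have hptl : p.support.tail.length = p.length := by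
          have := p.length_support
          have := p.support.length_tail
          omega
        have huniv : p.support.tail.toFinset = Finset.univ := by
          apply Finset.eq_univ_of_card
          rw [List.toFinset_card_of_nodup hpnd]
          omega
        refine ⟨x, p, hpc, fun z => ?_⟩
        have : z ∈ p.support.tail.toFinset := huniv ▸ Finset.mem_univ z
        exact List.mem_of_mem_tail (List.mem_toFinset.mp this)
    · rintro ⟨v, c, hc, hall⟩
      cases c with
      | nil => exact absurd rfl hc.ne_nil
      | @cons _ y _ hadj p =>
        have hnd : p.support.Nodup := hc.2
        have hall' : ∀ x, x ∈ p.support := by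
          intro x
          rcases List.mem_cons.mp (hall x) with rfl | h
          · exact p.end_mem_support
          · exact h
        have huniv : p.support.toFinset = Finset.univ :=
          Finset.eq_univ_iff_forall.mpr (fun x => List.mem_toFinset.mpr (hall' x))
        have hlen : p.support.length = n := by
          rw [← List.toFinset_card_of_nodup hnd, huniv, Finset.card_univ]
        refine ⟨inl v, (Walk.cons hadj p).map (iwcHom G x0 m), hc.map hinj, ?_⟩
        refine le_of_le_of_eq (b := (Walk.cons hadj p).length) ?_ (Walk.length_map ..).symm
        have := p.length_support
        simp only [Walk.length_cons]
        omega

/-- Let `G` be a connected non-complete graph on `n ≥ 3` vertices and let `G'` be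
obtained from the disjoint union of `G` and the complete graph `K_{n-1}` by
identifying a vertex `x0` of `G` with one vertex of `K_{n-1}`. Then `G'` is
connected, has `|V(G)| + n - 2` vertices, its degeneracy is `n - 2`, and it has a
cycle with at least `n` vertices iff `G` has a Hamiltonian cycle. -/
theorem degeneracy_cycle_reduction {V : Type*} [Fintype V] (G : SimpleGraph V)
    (hn : 3 ≤ Fintype.card V) (hconn : G.Connected) (hnc : G ≠ ⊤) (x0 : V) :
    (identifyWithClique G x0 (Fintype.card V - 2)).Connected ∧
    Fintype.card (V ⊕ Fin (Fintype.card V - 2)) = Fintype.card V + Fintype.card V - 2 ∧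
    (identifyWithClique G x0 (Fintype.card V - 2)).degeneracy = Fintype.card V - 2 ∧
    ((∃ (v : V ⊕ Fin (Fintype.card V - 2))
        (c : (identifyWithClique G x0 (Fintype.card V - 2)).Walk v v),
        c.IsCycle ∧ Fintype.card V ≤ c.length) ↔
     (∃ (v : V) (c : G.Walk v v), c.IsCycle ∧ ∀ x : V, x ∈ c.support)) :=
  degeneracy_cycle_reduction' G hn hconn hnc x0
end
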